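/- arXiv:hep-th/0205268 — 11 statements merged into one kernel-verified Lean document; each statement's English description precedes it below -/
import Mathlib

section
/- For all g₁, g₂ in SL(2,ℂ), the trace of the group commutator satisfies tr(g₁ g₂ g₁⁻¹ g₂⁻¹) = 2 + 4·Θ(X₁, X₂, X₃), where X₁ = tr(g₁)/2, X₂ = tr(g₂)/2, X₃ = tr(g₁g₂)/2. -/
/-!
By Cayley–Hamilton, every `A ∈ SL(2, R)` satisfies `A⁻¹ = tr A - A`, hence
`tr (X Y⁻¹) = tr X tr Y - tr (X Y)`. The commutator is `(AB)(BA)⁻¹`, so its trace is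
`tr(AB)² - tr(A² B²)`, and expanding `A² = tr A · A - 1`, `B² = tr B · B - 1` gives Fricke's
identity `tr [A, B] = tr(AB)² - tr A tr B tr(AB) + (tr A)² + (tr B)² - 2`; substituting half-traces
turns its right-hand side into `2 + 4 Θ`.
-/

open Matrix
open scoped MatrixGroups

/-- `Θ(X₁,X₂,X₃) := (X₃ − X₁X₂)² − (X₁² − 1)(X₂² − 1)`. -/
def Theta (X₁ X₂ X₃ : ℂ) : ℂ := (X₃ - X₁ * X₂) ^ 2 - (X₁ ^ 2 - 1) * (X₂ ^ 2 - 1)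

namespace Matrix.SpecialLinearGroup

variable {R : Type*} [CommRing R]

theorem SL2_coe_inv_eq_trace_smul_sub (A : SL(2, R)) :
    ((A⁻¹ : SL(2, R)) : Matrix (Fin 2) (Fin 2) R) =
      trace (A : Matrix (Fin 2) (Fin 2) R) • 1 - A := by
  rw [SL2_inv_expl]
  ext i j
  fin_cases i <;> fin_cases j <;> simp [trace_fin_two]

theorem SL2_sq_eq_trace_smul_sub (A : SL(2, R)) :
    (A : Matrix (Fin 2) (Fin 2) R) ^ 2 =
      trace (A : Matrix (Fin 2) (Fin 2) R) • (A : Matrix (Fin 2) (Fin 2) R) - 1 := by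
  have h := congrArg Subtype.val (mul_inv_cancel A)
  rw [coe_mul, SL2_coe_inv_eq_trace_smul_sub, mul_sub, mul_smul_comm, mul_one, coe_one] at h
  rw [sq, ← h]
  abel

theorem SL2_trace_mul_inv (A B : SL(2, R)) :
    trace ((A * B⁻¹ : SL(2, R)) : Matrix (Fin 2) (Fin 2) R) =
      trace (A : Matrix (Fin 2) (Fin 2) R) * trace (B : Matrix (Fin 2) (Fin 2) R) -
        trace ((A * B : SL(2, R)) : Matrix (Fin 2) (Fin 2) R) := by
  rw [coe_mul, coe_mul, SL2_coe_inv_eq_trace_smul_sub, mul_sub, mul_smul_comm, mul_one, trace_sub,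
    trace_smul, smul_eq_mul, mul_comm]

theorem SL2_trace_sq_mul_sq (A B : SL(2, R)) :
    trace ((A : Matrix (Fin 2) (Fin 2) R) ^ 2 * (B : Matrix (Fin 2) (Fin 2) R) ^ 2) =
      trace (A : Matrix (Fin 2) (Fin 2) R) * trace (B : Matrix (Fin 2) (Fin 2) R) *
          trace ((A * B : SL(2, R)) : Matrix (Fin 2) (Fin 2) R) -
        trace (A : Matrix (Fin 2) (Fin 2) R) ^ 2 - trace (B : Matrix (Fin 2) (Fin 2) R) ^ 2 + 2 := by
  rw [SL2_sq_eq_trace_smul_sub, SL2_sq_eq_trace_smul_sub, coe_mul]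
  simp only [sub_mul, mul_sub, smul_mul_assoc, mul_smul_comm, one_mul, mul_one,
    trace_sub, trace_smul, trace_one, Fintype.card_fin, smul_eq_mul]
  ring

theorem SL2_trace_commutator (A B : SL(2, R)) :
    trace ((A * B * A⁻¹ * B⁻¹ : SL(2, R)) : Matrix (Fin 2) (Fin 2) R) =
      trace ((A * B : SL(2, R)) : Matrix (Fin 2) (Fin 2) R) ^ 2 -
          trace (A : Matrix (Fin 2) (Fin 2) R) * trace (B : Matrix (Fin 2) (Fin 2) R) *
            trace ((A * B : SL(2, R)) : Matrix (Fin 2) (Fin 2) R) +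
        trace (A : Matrix (Fin 2) (Fin 2) R) ^ 2 + trace (B : Matrix (Fin 2) (Fin 2) R) ^ 2 - 2 := by
  have hcomm : A * B * A⁻¹ * B⁻¹ = A * B * (B * A)⁻¹ := by group
  have hBA : trace ((B * A : SL(2, R)) : Matrix (Fin 2) (Fin 2) R) =
      trace ((A * B : SL(2, R)) : Matrix (Fin 2) (Fin 2) R) := by
    rw [coe_mul, coe_mul, trace_mul_comm]
  have hcycle : trace ((A * B * (B * A) : SL(2, R)) : Matrix (Fin 2) (Fin 2) R) =
      trace ((A : Matrix (Fin 2) (Fin 2) R) ^ 2 * (B : Matrix (Fin 2) (Fin 2) R) ^ 2) := by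
    simp only [coe_mul, sq, ← mul_assoc]
    rw [trace_mul_comm, ← mul_assoc, ← mul_assoc]
  rw [hcomm, SL2_trace_mul_inv, hBA, hcycle, SL2_trace_sq_mul_sq]
  ring

end Matrix.SpecialLinearGroup

/-- For all `g₁, g₂ ∈ SL(2,ℂ)`,
`tr(g₁ g₂ g₁⁻¹ g₂⁻¹) = 2 + 4·Θ(X₁, X₂, X₃)` where `Xᵢ` are the half traces. -/
theorem trace_commutator_eq (g₁ g₂ : SL(2, ℂ)) :
    Matrix.trace ((g₁ * g₂ * g₁⁻¹ * g₂⁻¹ : SL(2, ℂ)) : Matrix (Fin 2) (Fin 2) ℂ) =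
      2 + 4 * Theta (Matrix.trace ((g₁ : Matrix (Fin 2) (Fin 2) ℂ)) / 2)
        (Matrix.trace ((g₂ : Matrix (Fin 2) (Fin 2) ℂ)) / 2)
        (Matrix.trace (((g₁ * g₂ : SL(2, ℂ)) : Matrix (Fin 2) (Fin 2) ℂ)) / 2) := by
  rw [SpecialLinearGroup.SL2_trace_commutator, Theta]
  ring
end

section
/- Let P : M₂(ℂ) → ℂ be the evaluation of a polynomial in the four matrix entries, and suppose P(h g h⁻¹) = P(g) for all g, h in SL(2,ℂ). Then there exists a single-variable polynomial q ∈ ℂ[X] such that P(g) = q(tr g) for every g in SL(2,ℂ). -/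
/-!
An element `g` of `SL(2, ℂ)` that is not scalar has a cyclic vector `v`, and in the basis
`v, g v` it becomes, by Cayley–Hamilton, the companion matrix `!![0, -1; 1, tr g]`; rescaling the
basis puts the change of basis in `SL(2, ℂ)`. So an invariant `P` agrees on non-scalar elements
with `q(tr g)`, where `q(t)` is `P` at the companion matrix. The two scalar elements `±1` are
limits of the non-scalar unipotents `!![±1, s; 0, ±1]`, along which `P` is a polynomial in `s`,
constant for `s ≠ 0` and hence also at `s = 0`.
-/

open Matrix Polynomial
open scoped MatrixGroups

theorem MvPolynomial.polynomial_eval_aeval {σ R : Type*} [CommRing R] (x : σ → R[X])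
    (P : MvPolynomial σ R) (t : R) :
    (aeval x P).eval t = eval (fun i => (x i).eval t) P := by
  rw [← Polynomial.coe_aeval_eq_eval, comp_aeval_apply]
  rfl

theorem Polynomial.eval_eq_of_forall_ne {R : Type*} [CommRing R] [IsDomain R] [Infinite R]
    (p : R[X]) {a b : R} (h : ∀ s ≠ a, p.eval s = b) : p.eval a = b := by
  have hp : p = C b := eq_of_infinite_eval_eq p (C b) <|
    (Set.finite_singleton a).infinite_compl.mono fun s hs => by simpa using h s hs
  rw [hp, eval_C]

theorem MvPolynomial.eval_eval_eq_of_forall_ne {σ R : Type*} [CommRing R] [IsDomain R]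
    [Infinite R] (P : MvPolynomial σ R) (x : σ → R[X]) {a b : R}
    (h : ∀ s ≠ a, eval (fun i => (x i).eval s) P = b) :
    eval (fun i => (x i).eval a) P = b := by
  simp only [← polynomial_eval_aeval] at h ⊢
  exact Polynomial.eval_eq_of_forall_ne _ h

namespace Matrix

variable {R K : Type*} [CommRing R] [Field K]

def krylovMatrix (A : Matrix (Fin 2) (Fin 2) R) (v : Fin 2 → R) : Matrix (Fin 2) (Fin 2) R :=
  !![v 0, (A *ᵥ v) 0; v 1, (A *ᵥ v) 1]

theorem mul_krylovMatrix {A : Matrix (Fin 2) (Fin 2) R} (hA : A.det = 1) (v : Fin 2 → R) :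
    A * krylovMatrix A v = krylovMatrix A v * !![0, -1; 1, A.trace] := by
  rw [det_fin_two] at hA
  ext i j
  fin_cases i <;> fin_cases j <;>
    simp [krylovMatrix, mulVec, dotProduct, Fin.sum_univ_two, trace_fin_two, Matrix.mul_apply]
  · linear_combination -v 0 * hA
  · linear_combination -v 1 * hA

theorem exists_det_krylovMatrix_ne_zero {A : Matrix (Fin 2) (Fin 2) R}
    (hA : ∀ c, A ≠ scalar (Fin 2) c) : ∃ v, (krylovMatrix A v).det ≠ 0 := by
  by_contra! h
  have h₁ := h ![1, 0]
  have h₂ := h ![0, 1]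
  have h₃ := h ![1, 1]
  simp [krylovMatrix, det_fin_two, mulVec, dotProduct, Fin.sum_univ_two] at h₁ h₂ h₃
  apply hA (A 0 0)
  ext i j
  fin_cases i <;> fin_cases j
  · rfl
  · exact h₂
  · exact h₁
  · simp only [scalar_apply, Fin.mk_one, diagonal_apply_eq]
    linear_combination h₃ - h₁ + h₂

theorem SpecialLinearGroup.exists_conj_eq_companion [IsAlgClosed K] (g : SL(2, K))
    (hg : ∀ c, (g : Matrix (Fin 2) (Fin 2) K) ≠ scalar (Fin 2) c) :
    ∃ h : SL(2, K), ((h * g * h⁻¹ : SL(2, K)) : Matrix (Fin 2) (Fin 2) K) =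
      !![0, -1; 1, (g : Matrix (Fin 2) (Fin 2) K).trace] := by
  set C : Matrix (Fin 2) (Fin 2) K := !![0, -1; 1, (g : Matrix (Fin 2) (Fin 2) K).trace]
  obtain ⟨v, hv⟩ := exists_det_krylovMatrix_ne_zero hg
  obtain ⟨z, hz⟩ := IsAlgClosed.exists_pow_nat_eq (krylovMatrix (g : Matrix _ _ K) v).det⁻¹ two_pos
  let σ : SL(2, K) :=
    ⟨z • krylovMatrix g v, by rw [det_smul, Fintype.card_fin, hz, inv_mul_cancel₀ hv]⟩
  have hσ : (g : Matrix (Fin 2) (Fin 2) K) * σ = σ * C := by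
    simp only [σ, mul_smul_comm, smul_mul_assoc]
    exact congrArg (z • ·) (mul_krylovMatrix g.2 v)
  refine ⟨σ⁻¹, ?_⟩
  calc ((σ⁻¹ * g * σ⁻¹⁻¹ : SL(2, K)) : Matrix (Fin 2) (Fin 2) K)
      = (σ⁻¹ : SL(2, K)) * ((g : Matrix (Fin 2) (Fin 2) K) * σ) := by
        simp only [inv_inv, coe_mul, Matrix.mul_assoc]
    _ = ((σ⁻¹ * σ : SL(2, K)) : Matrix (Fin 2) (Fin 2) K) * C := by
        rw [hσ, coe_mul, Matrix.mul_assoc]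
    _ = C := by rw [inv_mul_cancel, coe_one, Matrix.one_mul]

end Matrix

section InvariantPolynomial

variable {K : Type*} [Field K]

noncomputable def companionEval (P : MvPolynomial (Fin 2 × Fin 2) K) : K[X] :=
  MvPolynomial.aeval (fun p => (!![0, -1; 1, X] : Matrix (Fin 2) (Fin 2) K[X]) p.1 p.2) P

theorem eval_companionEval (P : MvPolynomial (Fin 2 × Fin 2) K) (t : K) :
    (companionEval P).eval t = MvPolynomial.eval (fun p => !![0, -1; 1, t] p.1 p.2) P := by
  rw [companionEval, MvPolynomial.polynomial_eval_aeval]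
  congr
  funext ⟨i, j⟩
  fin_cases i <;> fin_cases j <;> simp

theorem eval_scalar_eq_of_forall_ne_zero [Infinite K] (P : MvPolynomial (Fin 2 × Fin 2) K)
    {c b : K} (h : ∀ s ≠ 0, MvPolynomial.eval (fun p => !![c, s; 0, c] p.1 p.2) P = b) :
    MvPolynomial.eval (fun p => !![c, 0; 0, c] p.1 p.2) P = b := by
  have hline : ∀ s : K, (fun p : Fin 2 × Fin 2 => (!![C c, X; 0, C c] p.1 p.2).eval s) =
      fun p => !![c, s; 0, c] p.1 p.2 := fun s => by
    funext ⟨i, j⟩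
    fin_cases i <;> fin_cases j <;> simp
  rw [← hline 0]
  exact MvPolynomial.eval_eval_eq_of_forall_ne P _ fun s hs => hline s ▸ h s hs

theorem eval_eq_eval_trace_of_forall_ne_scalar [Infinite K] (P : MvPolynomial (Fin 2 × Fin 2) K)
    (q : K[X]) (hq : ∀ g : SL(2, K), (∀ c, (g : Matrix (Fin 2) (Fin 2) K) ≠ scalar (Fin 2) c) →
      MvPolynomial.eval (fun p => (g : Matrix (Fin 2) (Fin 2) K) p.1 p.2) P =
        q.eval (g : Matrix (Fin 2) (Fin 2) K).trace)
    (g : SL(2, K)) :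
    MvPolynomial.eval (fun p => (g : Matrix (Fin 2) (Fin 2) K) p.1 p.2) P =
      q.eval (g : Matrix (Fin 2) (Fin 2) K).trace := by
  by_cases hg : ∃ c, (g : Matrix (Fin 2) (Fin 2) K) = scalar (Fin 2) c
  · obtain ⟨c, hc⟩ := hg
    have hcc : c * c = 1 := by
      have hdet := g.2
      rw [hc, det_fin_two] at hdet
      simpa using hdet
    have hscalar : scalar (Fin 2) c = !![c, 0; 0, c] := by
      rw [eta_fin_two (scalar (Fin 2) c)]
      simp
    rw [hc, hscalar]
    refine eval_scalar_eq_of_forall_ne_zero P fun s hs => ?_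
    let u : SL(2, K) := ⟨!![c, s; 0, c], by simp [det_fin_two, hcc]⟩
    have hu := hq u fun d hd => hs (by simpa [u] using congr_fun₂ hd 0 1)
    simpa [u, trace_fin_two, two_mul] using hu
  · push Not at hg
    exact hq g hg

end InvariantPolynomial

/-- Any polynomial function on `M₂(ℂ)` (a polynomial in the four matrix entries) that is
invariant under conjugation by `SL(2,ℂ)` is, on `SL(2,ℂ)`, a polynomial in the trace. -/
theorem invariant_polynomial_is_polynomial_in_trace
    (P : MvPolynomial (Fin 2 × Fin 2) ℂ)
    (hinv : ∀ g h : SL(2, ℂ),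
      MvPolynomial.eval
          (fun p => ((h * g * h⁻¹ : SL(2, ℂ)) : Matrix (Fin 2) (Fin 2) ℂ) p.1 p.2) P =
        MvPolynomial.eval (fun p => ((g : Matrix (Fin 2) (Fin 2) ℂ)) p.1 p.2) P) :
    ∃ q : Polynomial ℂ, ∀ g : SL(2, ℂ),
      MvPolynomial.eval (fun p => ((g : Matrix (Fin 2) (Fin 2) ℂ)) p.1 p.2) P =
        q.eval (Matrix.trace ((g : Matrix (Fin 2) (Fin 2) ℂ))) := by
  refine ⟨companionEval P, eval_eq_eval_trace_of_forall_ne_scalar P _ fun g hg => ?_⟩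
  obtain ⟨h, hconj⟩ := SpecialLinearGroup.exists_conj_eq_companion g hg
  rw [← hinv g h, hconj, eval_companionEval]
end

section
/- Let X₁, X₂, X₃ ∈ ℂ and let r ∈ ℂ satisfy r² = X₁² − 1 and r ≠ 0. Define the matrices s₁ = [[X₁ + r, 0], [0, X₁ − r]] and s₂ = [[X₂ − (X₁X₂ − X₃)/r, 1], [−Θ(X₁,X₂,X₃)/(X₁² − 1), X₂ + (X₁X₂ − X₃)/r]]. Then det(s₁) = 1, det(s₂) = 1, tr(s₁) = 2X₁, tr(s₂) = 2X₂, and tr(s₁ s₂) = 2X₃ (i.e. the explicit section s of the trace-coordinate map π satisfies π ∘ s = id). -/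
open Matrix

/-! Once `X₁² − 1` is written as `r²`, everything is a computation in `c = X₁X₂ − X₃`:
`Θ = c² − r²(X₂² − 1)` is precisely the value making `det s₂ = X₂² − (c² − Θ)/r²` equal to 1,
and `tr(s₁ s₂) = 2(X₁X₂ − c)`. -/

theorem theta_eq_of_sq_eq {X₁ X₂ X₃ r : ℂ} (hr : r ^ 2 = X₁ ^ 2 - 1) :
    Theta X₁ X₂ X₃ = (X₁ * X₂ - X₃) ^ 2 - r ^ 2 * (X₂ ^ 2 - 1) := by
  rw [Theta, hr]
  ring

section

variable {K : Type*} [Field K]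

theorem det_fin_two_add_sub_of_sq_eq {x r : K} (hr : r ^ 2 = x ^ 2 - 1) :
    !![x + r, 0; 0, x - r].det = 1 := by
  rw [det_fin_two_of]
  linear_combination -hr

theorem trace_fin_two_sub_add (a b p q : K) : !![a - b, p; q, a + b].trace = 2 * a := by
  rw [trace_fin_two_of]
  ring

theorem trace_fin_two_add_sub (a b p q : K) : !![a + b, p; q, a - b].trace = 2 * a := by
  rw [trace_fin_two_of]
  ring

theorem det_fin_two_sub_div_add_div {y c r : K} (hr : r ≠ 0) :
    !![y - c / r, 1; -(c ^ 2 - r ^ 2 * (y ^ 2 - 1)) / r ^ 2, y + c / r].det = 1 := by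
  rw [det_fin_two_of]
  field_simp
  ring

theorem trace_diag_mul_sub_div_add_div {x y c r p q : K} (hr : r ≠ 0) :
    (!![x + r, 0; 0, x - r] * !![y - c / r, p; q, y + c / r]).trace = 2 * (x * y - c) := by
  rw [mul_fin_two, trace_fin_two_of]
  field_simp
  ring

end

/-- The explicit section of the trace-coordinate map: given `r` with `r² = X₁² − 1`, `r ≠ 0`,
the matrices `s₁, s₂` have determinant 1 and realize the prescribed half-traces. -/
theorem section_of_trace_coordinates (X₁ X₂ X₃ r : ℂ) (hr : r ^ 2 = X₁ ^ 2 - 1) (hr0 : r ≠ 0) :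
    let s₁ : Matrix (Fin 2) (Fin 2) ℂ := !![X₁ + r, 0; 0, X₁ - r]
    let s₂ : Matrix (Fin 2) (Fin 2) ℂ :=
      !![X₂ - (X₁ * X₂ - X₃) / r, 1;
         -(Theta X₁ X₂ X₃) / (X₁ ^ 2 - 1), X₂ + (X₁ * X₂ - X₃) / r]
    s₁.det = 1 ∧ s₂.det = 1 ∧
      s₁.trace = 2 * X₁ ∧ s₂.trace = 2 * X₂ ∧ (s₁ * s₂).trace = 2 * X₃ := by
  rw [← hr, theta_eq_of_sq_eq hr]
  refine ⟨det_fin_two_add_sub_of_sq_eq hr, det_fin_two_sub_div_add_div hr0,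
    trace_fin_two_add_sub _ _ _ _, trace_fin_two_sub_add _ _ _ _, ?_⟩
  rw [trace_diag_mul_sub_div_add_div hr0]
  ring
end

section
/- Let X₁, X₂, X₃ ∈ ℂ, let r ∈ ℂ satisfy r² = X₁² − 1 and r ≠ 0, and suppose Θ(X₁,X₂,X₃) ≠ 0. Let s₁(r), s₂(r) be the section matrices s₁(r) = [[X₁ + r, 0], [0, X₁ − r]] and s₂(r) = [[X₂ − (X₁X₂ − X₃)/r, 1], [−Θ/(X₁² − 1), X₂ + (X₁X₂ − X₃)/r]]. Then there exists h in SL(2,ℂ) such that h s₁(r) h⁻¹ = s₁(−r) and h s₂(r) h⁻¹ = s₂(−r); i.e. the two determinations of the square root in the section s yield gauge-equivalent (simultaneously conjugate) pairs. -/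
open Matrix
open scoped MatrixGroups

/-- The first section matrix `s₁(r)`. -/
def sec₁ (X₁ r : ℂ) : Matrix (Fin 2) (Fin 2) ℂ := !![X₁ + r, 0; 0, X₁ - r]

/-- The second section matrix `s₂(r)`. -/
noncomputable def sec₂ (X₁ X₂ X₃ r : ℂ) : Matrix (Fin 2) (Fin 2) ℂ :=
  !![X₂ - (X₁ * X₂ - X₃) / r, 1;
     -(Theta X₁ X₂ X₃) / (X₁ ^ 2 - 1), X₂ + (X₁ * X₂ - X₃) / r]

section AntidiagSL

variable {K : Type*} [Field K]

def antidiagSL (p : K) (hp : p ≠ 0) : SL(2, K) :=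
  ⟨!![0, p; -p⁻¹, 0], by simp [det_fin_two_of, hp]⟩

theorem antidiagSL_conj (p : K) (hp : p ≠ 0) (a b c d : K) :
    (antidiagSL p hp : Matrix (Fin 2) (Fin 2) K) * !![a, b; c, d] *
        ((antidiagSL p hp)⁻¹ : SL(2, K)) =
      !![d, -(p ^ 2 * c); -(b / p ^ 2), a] := by
  rw [Matrix.SpecialLinearGroup.coe_inv]
  simp only [antidiagSL, Matrix.SpecialLinearGroup.coe_mk, adjugate_fin_two_of]
  ext i j
  fin_cases i <;> fin_cases j <;> simp <;> field_simp

end AntidiagSL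

/-- The two determinations of the square root in the section yield gauge-equivalent
(simultaneously `SL(2,ℂ)`-conjugate) pairs of matrices. -/
theorem section_sqrt_determinations_conjugate (X₁ X₂ X₃ r : ℂ)
    (hr : r ^ 2 = X₁ ^ 2 - 1) (hr0 : r ≠ 0) (hTheta : Theta X₁ X₂ X₃ ≠ 0) :
    ∃ h : SL(2, ℂ),
      (h : Matrix (Fin 2) (Fin 2) ℂ) * sec₁ X₁ r * ((h⁻¹ : SL(2, ℂ)) : Matrix (Fin 2) (Fin 2) ℂ) =
        sec₁ X₁ (-r) ∧
      (h : Matrix (Fin 2) (Fin 2) ℂ) * sec₂ X₁ X₂ X₃ r *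
          ((h⁻¹ : SL(2, ℂ)) : Matrix (Fin 2) (Fin 2) ℂ) =
        sec₂ X₁ X₂ X₃ (-r) := by
  obtain ⟨c, hc⟩ := IsAlgClosed.exists_pow_nat_eq (Theta X₁ X₂ X₃) two_pos
  have hc0 : c ≠ 0 := by rintro rfl; exact hTheta (by simp [← hc])
  have hp2 : (r / c) ^ 2 = (X₁ ^ 2 - 1) / Theta X₁ X₂ X₃ := by rw [div_pow, hr, hc]
  have hX : X₁ ^ 2 - 1 ≠ 0 := hr ▸ pow_ne_zero 2 hr0
  -- Antidiagonal conjugation swaps the diagonal entries, i.e. turns `r` into `-r`; the scale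
  -- `r / √Θ` is the one that keeps the upper right entry `1` of `s₂`.
  refine ⟨antidiagSL (r / c) (div_ne_zero hr0 hc0), ?_, ?_⟩
  · rw [sec₁, sec₁, antidiagSL_conj]
    simp [sub_eq_add_neg]
  · rw [sec₂, sec₂, antidiagSL_conj, hp2]
    ext i j
    fin_cases i <;> fin_cases j <;> simp <;> field_simp <;> ring
end

section
/- Let (g₁, g₂) and (g₁', g₂') be pairs of elements of SL(2,ℂ) with tr(g₁) = tr(g₁'), tr(g₂) = tr(g₂'), and tr(g₁g₂) = tr(g₁'g₂'). Assume (tr(g₁))² ≠ 4 or (tr(g₂))² ≠ 4, and assume tr(g₁ g₂ g₁⁻¹ g₂⁻¹) ≠ 2. Then there exists h in SL(2,ℂ) with g₁' = h g₁ h⁻¹ and g₂' = h g₂ h⁻¹; i.e. on the set G₂, the three trace coordinates (tr(g₁)/2, tr(g₂)/2, tr(g₁g₂)/2) separate the orbits of the diagonal conjugation action. -/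
open Matrix
open scoped MatrixGroups

noncomputable section AuxSL2

namespace AuxSL2

/-- diagonal element of SL2 -/
def dm (l m : ℂ) (h : l * m = 1) : SL(2, ℂ) :=
  ⟨!![l, 0; 0, m], by simp [Matrix.det_fin_two_of, h]⟩

def wsl : SL(2, ℂ) := ⟨!![0, 1; -1, 0], by simp [Matrix.det_fin_two_of]⟩

lemma conj_of_mul_eq (h g D : SL(2, ℂ))
    (H : (h : Matrix (Fin 2) (Fin 2) ℂ) * g = (D : Matrix (Fin 2) (Fin 2) ℂ) * h) :
    h * g * h⁻¹ = D := by
  have h2 : h * g = D * h := Subtype.coe_injective (by simpa using H)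
  calc h * g * h⁻¹ = D * h * h⁻¹ := by rw [h2]
    _ = D := by group

lemma det_entries (g : SL(2, ℂ)) :
    (g : Matrix (Fin 2) (Fin 2) ℂ) 0 0 * g 1 1 - g 0 1 * g 1 0 = 1 := by
  have := g.prop
  rwa [Matrix.det_fin_two] at this

lemma trace_conj (h g : SL(2, ℂ)) :
    Matrix.trace ((h * g * h⁻¹ : SL(2, ℂ)) : Matrix (Fin 2) (Fin 2) ℂ) =
      Matrix.trace (g : Matrix (Fin 2) (Fin 2) ℂ) := by
  have : ((h * g * h⁻¹ : SL(2, ℂ)) : Matrix (Fin 2) (Fin 2) ℂ) =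
      (h : Matrix (Fin 2) (Fin 2) ℂ) * g * (h⁻¹ : SL(2, ℂ)) := by simp
  rw [this, Matrix.trace_mul_cycle]
  have : ((h⁻¹ : SL(2, ℂ)) : Matrix (Fin 2) (Fin 2) ℂ) * h = 1 := by
    have : (h⁻¹ * h : SL(2, ℂ)) = 1 := inv_mul_cancel h
    calc ((h⁻¹ : SL(2, ℂ)) : Matrix (Fin 2) (Fin 2) ℂ) * h
        = ((h⁻¹ * h : SL(2, ℂ)) : Matrix (Fin 2) (Fin 2) ℂ) :=
          (Matrix.SpecialLinearGroup.coe_mul h⁻¹ h).symm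
      _ = 1 := by rw [this]; rfl
  rw [this, Matrix.one_mul]

lemma mat2_ext {A B : Matrix (Fin 2) (Fin 2) ℂ} (h00 : A 0 0 = B 0 0) (h01 : A 0 1 = B 0 1)
    (h10 : A 1 0 = B 1 0) (h11 : A 1 1 = B 1 1) : A = B := by
  ext i j; fin_cases i <;> fin_cases j <;> assumption

lemma diag_of_b_ne (g : SL(2, ℂ)) (l m : ℂ) (hprod : l * m = 1)
    (hsum : l + m = Matrix.trace (g : Matrix (Fin 2) (Fin 2) ℂ))
    (hne : l ≠ m) (hb : (g : Matrix (Fin 2) (Fin 2) ℂ) 0 1 ≠ 0) :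
    ∃ h : SL(2, ℂ), h * g * h⁻¹ = dm l m hprod := by
  set a := (g : Matrix (Fin 2) (Fin 2) ℂ) 0 0 with ha
  set b := (g : Matrix (Fin 2) (Fin 2) ℂ) 0 1 with hbdef
  set c := (g : Matrix (Fin 2) (Fin 2) ℂ) 1 0 with hc
  set d := (g : Matrix (Fin 2) (Fin 2) ℂ) 1 1 with hd
  have hdet : a * d - b * c = 1 := det_entries g
  rw [Matrix.trace_fin_two] at hsum
  have hlm : l - m ≠ 0 := sub_ne_zero.mpr hne
  set e : ℂ := (b * (l - m))⁻¹ with he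
  have hbe : b * (l - m) ≠ 0 := mul_ne_zero hb hlm
  have hee : b * (l - m) * e = 1 := mul_inv_cancel₀ hbe
  refine ⟨⟨!![(l - d) * e, b * e; m - d, b], ?_⟩, ?_⟩
  · rw [Matrix.det_fin_two_of]
    linear_combination hee
  · apply conj_of_mul_eq
    apply mat2_ext <;>
      simp only [SpecialLinearGroup.coe_mul, dm, Matrix.mul_apply, Fin.sum_univ_two,
        Matrix.of_apply, Matrix.cons_val_zero, Matrix.cons_val_one, Matrix.head_cons,
        Matrix.head_fin_const, Matrix.cons_val_fin_one, Matrix.cons_val']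
    · linear_combination e * hprod - e * l * hsum - e * hdet
    · ring
    · linear_combination hprod - m * hsum - hdet
    · ring

lemma wconj (g : SL(2, ℂ)) :
    ((wsl * g * wsl⁻¹ : SL(2, ℂ)) : Matrix (Fin 2) (Fin 2) ℂ) =
      !![(g : Matrix (Fin 2) (Fin 2) ℂ) 1 1, -((g : Matrix (Fin 2) (Fin 2) ℂ) 1 0);
         -((g : Matrix (Fin 2) (Fin 2) ℂ) 0 1), (g : Matrix (Fin 2) (Fin 2) ℂ) 0 0] := by
  simp only [Matrix.SpecialLinearGroup.coe_mul, Matrix.SpecialLinearGroup.coe_inv]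
  apply mat2_ext <;>
    simp [wsl, Matrix.SpecialLinearGroup.coe_mul, Matrix.SpecialLinearGroup.coe_inv, Matrix.adjugate_fin_two,
      Matrix.mul_apply, Matrix.vecMul, dotProduct, Fin.sum_univ_two]

lemma diag (g : SL(2, ℂ)) (l m : ℂ) (hprod : l * m = 1)
    (hsum : l + m = Matrix.trace (g : Matrix (Fin 2) (Fin 2) ℂ))
    (hne : l ≠ m) :
    ∃ h : SL(2, ℂ), h * g * h⁻¹ = dm l m hprod := by
  have hl0 : l ≠ 0 := left_ne_zero_of_mul_eq_one hprod
  by_cases hb : (g : Matrix (Fin 2) (Fin 2) ℂ) 0 1 ≠ 0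
  · exact diag_of_b_ne g l m hprod hsum hne hb
  push_neg at hb
  by_cases hc : (g : Matrix (Fin 2) (Fin 2) ℂ) 1 0 ≠ 0
  · set g' := wsl * g * wsl⁻¹ with hg'def
    have hg' := wconj g
    have hb' : (g' : Matrix (Fin 2) (Fin 2) ℂ) 0 1 ≠ 0 := by
      rw [hg'def, hg']; simpa using hc
    have hsum' : l + m = Matrix.trace (g' : Matrix (Fin 2) (Fin 2) ℂ) := by
      rw [hg'def, trace_conj]; exact hsum
    obtain ⟨h, hh⟩ := diag_of_b_ne g' l m hprod hsum' hne hb'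
    refine ⟨h * wsl, ?_⟩
    rw [show h * wsl * g * (h * wsl)⁻¹ = h * (wsl * g * wsl⁻¹) * h⁻¹ by group]
    exact hh
  · push_neg at hc
    have hdet := det_entries g
    rw [hb, hc] at hdet
    rw [Matrix.trace_fin_two] at hsum
    set a := (g : Matrix (Fin 2) (Fin 2) ℂ) 0 0 with ha
    set d := (g : Matrix (Fin 2) (Fin 2) ℂ) 1 1 with hd
    have hfac : (a - l) * (a - m) = 0 := by
      linear_combination (-a) * hsum - hdet + hprod
    rcases mul_eq_zero.mp hfac with h0 | h0
    · have hal : a = l := sub_eq_zero.mp h0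
      have hdm : d = m := by
        have hld : l * d = l * m := by linear_combination hdet - d * hal - hprod
        exact mul_left_cancel₀ hl0 hld
      refine ⟨1, ?_⟩
      rw [inv_one, mul_one, one_mul]
      apply Subtype.coe_injective
      apply mat2_ext <;> simp [dm, ← ha, ← hd, hal, hdm, hb, hc]
    · have ham : a = m := sub_eq_zero.mp h0
      have hdl : d = l := by
        have hm0 : m ≠ 0 := right_ne_zero_of_mul_eq_one hprod
        have hmd : m * d = m * l := by linear_combination hdet - d * ham - hprod
        exact mul_left_cancel₀ hm0 hmd
      refine ⟨wsl, Subtype.coe_injective ?_⟩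
      show ((wsl * g * wsl⁻¹ : SL(2, ℂ)) : Matrix (Fin 2) (Fin 2) ℂ) = _
      rw [wconj g]
      apply mat2_ext <;> simp [dm, ← ha, ← hd, ham, hdl, hb, hc]

lemma trace_comm_formula (g h : SL(2, ℂ)) :
    Matrix.trace (((g * h * g⁻¹ * h⁻¹ : SL(2, ℂ))) : Matrix (Fin 2) (Fin 2) ℂ) =
      (Matrix.trace (g : Matrix (Fin 2) (Fin 2) ℂ))^2 +
      (Matrix.trace (h : Matrix (Fin 2) (Fin 2) ℂ))^2 +
      (Matrix.trace ((g * h : SL(2, ℂ)) : Matrix (Fin 2) (Fin 2) ℂ))^2 -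
      Matrix.trace (g : Matrix (Fin 2) (Fin 2) ℂ) * Matrix.trace (h : Matrix (Fin 2) (Fin 2) ℂ) *
        Matrix.trace ((g * h : SL(2, ℂ)) : Matrix (Fin 2) (Fin 2) ℂ) - 2 := by
  have hg := det_entries g; have hh := det_entries h
  simp only [Matrix.SpecialLinearGroup.coe_mul, Matrix.SpecialLinearGroup.coe_inv, Matrix.adjugate_fin_two,
    Matrix.trace_fin_two, Matrix.mul_apply, Fin.sum_univ_two, Matrix.of_apply,
    Matrix.cons_val_zero, Matrix.cons_val_one, Matrix.head_cons, Matrix.head_fin_const,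
    Matrix.cons_val_fin_one, Matrix.cons_val']
  linear_combination (2 * (h : Matrix (Fin 2) (Fin 2) ℂ) 0 0 * h 1 1 - 2 +
      ((h : Matrix (Fin 2) (Fin 2) ℂ) 1 1) ^ 2 + ((h : Matrix (Fin 2) (Fin 2) ℂ) 0 0) ^ 2) * hg +
    (((g : Matrix (Fin 2) (Fin 2) ℂ) 0 0) ^ 2 + ((g : Matrix (Fin 2) (Fin 2) ℂ) 1 1) ^ 2 +
      2 * (g : Matrix (Fin 2) (Fin 2) ℂ) 0 1 * (g : Matrix (Fin 2) (Fin 2) ℂ) 1 0) * hh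

lemma trace_dm_mul (l m : ℂ) (hp : l * m = 1) (B : SL(2, ℂ)) :
    Matrix.trace ((dm l m hp * B : SL(2, ℂ)) : Matrix (Fin 2) (Fin 2) ℂ) =
      l * (B : Matrix (Fin 2) (Fin 2) ℂ) 0 0 + m * (B : Matrix (Fin 2) (Fin 2) ℂ) 1 1 := by
  simp only [Matrix.SpecialLinearGroup.coe_mul, Matrix.SpecialLinearGroup.coe_inv]
  simp [dm, Matrix.SpecialLinearGroup.coe_mul, Matrix.trace_fin_two, Matrix.mul_apply,
    Fin.sum_univ_two, Matrix.vecMul, dotProduct]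

lemma trace_comm_dm (l m : ℂ) (hp : l * m = 1) (B : SL(2, ℂ)) :
    Matrix.trace ((dm l m hp * B * (dm l m hp)⁻¹ * B⁻¹ : SL(2, ℂ)) : Matrix (Fin 2) (Fin 2) ℂ)
      - 2 = -((B : Matrix (Fin 2) (Fin 2) ℂ) 0 1 * (B : Matrix (Fin 2) (Fin 2) ℂ) 1 0) *
        (l - m) ^ 2 := by
  have hB := det_entries B
  simp only [Matrix.SpecialLinearGroup.coe_mul, Matrix.SpecialLinearGroup.coe_inv]
  simp only [dm, Matrix.SpecialLinearGroup.coe_mul, Matrix.SpecialLinearGroup.coe_inv, Matrix.adjugate_fin_two,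
    Matrix.trace_fin_two, Matrix.mul_apply, Fin.sum_univ_two, Matrix.of_apply,
    Matrix.cons_val_zero, Matrix.cons_val_one, Matrix.head_cons, Matrix.head_fin_const,
    Matrix.cons_val_fin_one, Matrix.cons_val']
  linear_combination (2 * ((B : Matrix (Fin 2) (Fin 2) ℂ) 0 0 * B 1 1 - (B : Matrix (Fin 2) (Fin 2) ℂ) 0 1 * B 1 0)) * hp + 2 * hB

theorem main_aux (g₁ g₂ g₁' g₂' : SL(2, ℂ))
    (h₁ : Matrix.trace ((g₁ : Matrix (Fin 2) (Fin 2) ℂ)) =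
      Matrix.trace ((g₁' : Matrix (Fin 2) (Fin 2) ℂ)))
    (h₂ : Matrix.trace ((g₂ : Matrix (Fin 2) (Fin 2) ℂ)) =
      Matrix.trace ((g₂' : Matrix (Fin 2) (Fin 2) ℂ)))
    (h₃ : Matrix.trace (((g₁ * g₂ : SL(2, ℂ)) : Matrix (Fin 2) (Fin 2) ℂ)) =
      Matrix.trace (((g₁' * g₂' : SL(2, ℂ)) : Matrix (Fin 2) (Fin 2) ℂ)))
    (hreg1 : (Matrix.trace ((g₁ : Matrix (Fin 2) (Fin 2) ℂ))) ^ 2 ≠ 4)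
    (hco : Matrix.trace (((g₁ * g₂ * g₁⁻¹ * g₂⁻¹ : SL(2, ℂ)) : Matrix (Fin 2) (Fin 2) ℂ)) ≠ 2)
    (hco' : Matrix.trace (((g₁' * g₂' * g₁'⁻¹ * g₂'⁻¹ : SL(2, ℂ)) : Matrix (Fin 2) (Fin 2) ℂ))
      ≠ 2) :
    ∃ h : SL(2, ℂ), g₁' = h * g₁ * h⁻¹ ∧ g₂' = h * g₂ * h⁻¹ := by
  set t : ℂ := Matrix.trace ((g₁ : Matrix (Fin 2) (Fin 2) ℂ)) with ht
  obtain ⟨s, hs⟩ := IsAlgClosed.exists_pow_nat_eq (t ^ 2 - 4) (n := 2) (by norm_num)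
  have hs0 : s ≠ 0 := by
    intro h0
    apply hreg1
    rw [h0] at hs
    linear_combination -hs
  set l : ℂ := (t + s) / 2 with hl
  set m : ℂ := (t - s) / 2 with hm
  have hprod : l * m = 1 := by
    rw [hl, hm]
    field_simp
    linear_combination -hs
  have hsum1 : l + m = t := by rw [hl, hm]; ring
  have hne : l ≠ m := by
    intro h0
    apply hs0
    have : s = l - m := by rw [hl, hm]; ring
    rw [this, h0, sub_self]
  obtain ⟨p, hp⟩ := diag g₁ l m hprod hsum1 hne
  obtain ⟨p', hp'⟩ := diag g₁' l m hprod (by rw [hsum1, ht]; exact h₁) hne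
  set D : SL(2, ℂ) := dm l m hprod with hD
  set B : SL(2, ℂ) := p * g₂ * p⁻¹ with hB
  set B' : SL(2, ℂ) := p' * g₂' * p'⁻¹ with hB'
  have hdetB := det_entries B
  have hdetB' := det_entries B'
  have trBB' : (B : Matrix (Fin 2) (Fin 2) ℂ) 0 0 + B 1 1 =
      (B' : Matrix (Fin 2) (Fin 2) ℂ) 0 0 + B' 1 1 := by
    have e1 : Matrix.trace ((B : SL(2,ℂ)) : Matrix (Fin 2) (Fin 2) ℂ) =
        Matrix.trace ((B' : SL(2,ℂ)) : Matrix (Fin 2) (Fin 2) ℂ) := by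
      rw [hB, hB', trace_conj, trace_conj]; exact h₂
    rw [Matrix.trace_fin_two, Matrix.trace_fin_two] at e1
    exact e1
  have trDBW : l * (B : Matrix (Fin 2) (Fin 2) ℂ) 0 0 + m * B 1 1 =
      l * (B' : Matrix (Fin 2) (Fin 2) ℂ) 0 0 + m * B' 1 1 := by
    rw [← trace_dm_mul l m hprod B, ← trace_dm_mul l m hprod B']
    have e1 : (dm l m hprod) * B = p * (g₁ * g₂) * p⁻¹ := by rw [← hD, ← hp, hB]; group
    have e2 : (dm l m hprod) * B' = p' * (g₁' * g₂') * p'⁻¹ := by rw [← hD, ← hp', hB']; group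
    rw [e1, e2, trace_conj, trace_conj]
    exact h₃
  have hlmne : l - m ≠ 0 := sub_ne_zero.mpr hne
  have h00 : (B : Matrix (Fin 2) (Fin 2) ℂ) 0 0 = (B' : Matrix (Fin 2) (Fin 2) ℂ) 0 0 := by
    apply mul_left_cancel₀ hlmne
    linear_combination trDBW - m * trBB'
  have h11 : (B : Matrix (Fin 2) (Fin 2) ℂ) 1 1 = (B' : Matrix (Fin 2) (Fin 2) ℂ) 1 1 := by
    linear_combination trBB' - h00
  have hbc : (B : Matrix (Fin 2) (Fin 2) ℂ) 0 1 * B 1 0 =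
      (B' : Matrix (Fin 2) (Fin 2) ℂ) 0 1 * B' 1 0 := by
    linear_combination -hdetB + hdetB' + (B : Matrix (Fin 2) (Fin 2) ℂ) 1 1 * h00 +
      (B' : Matrix (Fin 2) (Fin 2) ℂ) 0 0 * h11
  -- nonvanishing of off-diagonal entries
  have hcommB : Matrix.trace ((D * B * D⁻¹ * B⁻¹ : SL(2, ℂ)) : Matrix (Fin 2) (Fin 2) ℂ) ≠ 2 := by
    have e1 : D * B * D⁻¹ * B⁻¹ = p * (g₁ * g₂ * g₁⁻¹ * g₂⁻¹) * p⁻¹ := by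
      rw [← hp, hB]; group
    rw [e1, trace_conj]
    exact hco
  have hBbc : (B : Matrix (Fin 2) (Fin 2) ℂ) 0 1 * B 1 0 ≠ 0 := by
    intro h0
    apply hcommB
    have := trace_comm_dm l m hprod B
    rw [h0, ← hD] at this
    linear_combination this
  have hB01 : (B : Matrix (Fin 2) (Fin 2) ℂ) 0 1 ≠ 0 := fun h0 => hBbc (by rw [h0, zero_mul])
  have hB'bc : (B' : Matrix (Fin 2) (Fin 2) ℂ) 0 1 * B' 1 0 ≠ 0 := hbc ▸ hBbc
  have hB'01 : (B' : Matrix (Fin 2) (Fin 2) ℂ) 0 1 ≠ 0 := fun h0 => hB'bc (by rw [h0, zero_mul])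
  -- build the diagonal conjugator
  obtain ⟨r, hr⟩ := IsAlgClosed.exists_pow_nat_eq
    ((B' : Matrix (Fin 2) (Fin 2) ℂ) 0 1 * ((B : Matrix (Fin 2) (Fin 2) ℂ) 0 1)⁻¹)
    (n := 2) (by norm_num)
  have hr2 : r ^ 2 * (B : Matrix (Fin 2) (Fin 2) ℂ) 0 1 =
      (B' : Matrix (Fin 2) (Fin 2) ℂ) 0 1 := by
    rw [hr]; field_simp
  have hr0 : r ≠ 0 := by
    intro h0
    apply hB'01
    rw [← hr2, h0]
    ring
  have hrr : r * r⁻¹ = 1 := mul_inv_cancel₀ hr0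
  set k : SL(2, ℂ) := dm r r⁻¹ hrr with hk
  have kD : k * D * k⁻¹ = D := by
    apply conj_of_mul_eq
    apply mat2_ext <;>
      simp only [hk, hD, dm, SpecialLinearGroup.coe_mul, Matrix.mul_apply, Fin.sum_univ_two,
        Matrix.of_apply, Matrix.cons_val_zero, Matrix.cons_val_one, Matrix.head_cons,
        Matrix.head_fin_const, Matrix.cons_val_fin_one, Matrix.cons_val'] <;> ring
  have h1010 : (B : Matrix (Fin 2) (Fin 2) ℂ) 1 0 =
      r ^ 2 * (B' : Matrix (Fin 2) (Fin 2) ℂ) 1 0 := by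
    apply mul_left_cancel₀ hB01
    linear_combination -(B' : Matrix (Fin 2) (Fin 2) ℂ) 1 0 * hr2 + hbc
  have kB : k * B * k⁻¹ = B' := by
    apply conj_of_mul_eq
    apply mat2_ext <;>
      simp only [hk, dm, SpecialLinearGroup.coe_mul, Matrix.mul_apply, Fin.sum_univ_two,
        Matrix.of_apply, Matrix.cons_val_zero, Matrix.cons_val_one, Matrix.head_cons,
        Matrix.head_fin_const, Matrix.cons_val_fin_one, Matrix.cons_val']
    · linear_combination r * h00
    · linear_combination (-(r * (B : Matrix (Fin 2) (Fin 2) ℂ) 0 1)) * hrr + r⁻¹ * hr2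
    · linear_combination r⁻¹ * h1010 + (r * (B' : Matrix (Fin 2) (Fin 2) ℂ) 1 0) * hrr
    · linear_combination r⁻¹ * h11
  refine ⟨p'⁻¹ * k * p, ?_, ?_⟩
  · have e1 : (p'⁻¹ * k * p) * g₁ * (p'⁻¹ * k * p)⁻¹ =
        p'⁻¹ * (k * (p * g₁ * p⁻¹) * k⁻¹) * p' := by group
    rw [e1, hp, kD, ← hp']
    group
  · have e1 : (p'⁻¹ * k * p) * g₂ * (p'⁻¹ * k * p)⁻¹ =
        p'⁻¹ * (k * (p * g₂ * p⁻¹) * k⁻¹) * p' := by group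
    rw [e1, ← hB, kB, hB']
    group

end AuxSL2

end AuxSL2

open AuxSL2 in
/-- On the set `G₂`, the three trace coordinates separate the orbits of the diagonal
conjugation action of `SL(2,ℂ)` on pairs. -/
theorem traces_separate_orbits_on_G2
    (g₁ g₂ g₁' g₂' : SL(2, ℂ))
    (h₁ : Matrix.trace ((g₁ : Matrix (Fin 2) (Fin 2) ℂ)) =
      Matrix.trace ((g₁' : Matrix (Fin 2) (Fin 2) ℂ)))
    (h₂ : Matrix.trace ((g₂ : Matrix (Fin 2) (Fin 2) ℂ)) =
      Matrix.trace ((g₂' : Matrix (Fin 2) (Fin 2) ℂ)))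
    (h₃ : Matrix.trace (((g₁ * g₂ : SL(2, ℂ)) : Matrix (Fin 2) (Fin 2) ℂ)) =
      Matrix.trace (((g₁' * g₂' : SL(2, ℂ)) : Matrix (Fin 2) (Fin 2) ℂ)))
    (hreg : (Matrix.trace ((g₁ : Matrix (Fin 2) (Fin 2) ℂ))) ^ 2 ≠ 4 ∨
      (Matrix.trace ((g₂ : Matrix (Fin 2) (Fin 2) ℂ))) ^ 2 ≠ 4)
    (hcomm : Matrix.trace (((g₁ * g₂ * g₁⁻¹ * g₂⁻¹ : SL(2, ℂ)) : Matrix (Fin 2) (Fin 2) ℂ)) ≠ 2) :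
    ∃ h : SL(2, ℂ), g₁' = h * g₁ * h⁻¹ ∧ g₂' = h * g₂ * h⁻¹ := by
  have hco' : Matrix.trace (((g₁' * g₂' * g₁'⁻¹ * g₂'⁻¹ : SL(2, ℂ)) :
      Matrix (Fin 2) (Fin 2) ℂ)) ≠ 2 := by
    rw [trace_comm_formula g₁' g₂', ← h₁, ← h₂, ← h₃]
    rw [trace_comm_formula g₁ g₂] at hcomm
    exact hcomm
  rcases hreg with hr | hr
  · exact main_aux g₁ g₂ g₁' g₂' h₁ h₂ h₃ hr hcomm hco'
  · have tmc : Matrix.trace (((g₂ * g₁ : SL(2, ℂ)) : Matrix (Fin 2) (Fin 2) ℂ)) =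
        Matrix.trace (((g₁ * g₂ : SL(2, ℂ)) : Matrix (Fin 2) (Fin 2) ℂ)) := by
      rw [Matrix.SpecialLinearGroup.coe_mul, Matrix.SpecialLinearGroup.coe_mul]
      exact Matrix.trace_mul_comm _ _
    have tmc' : Matrix.trace (((g₂' * g₁' : SL(2, ℂ)) : Matrix (Fin 2) (Fin 2) ℂ)) =
        Matrix.trace (((g₁' * g₂' : SL(2, ℂ)) : Matrix (Fin 2) (Fin 2) ℂ)) := by
      rw [Matrix.SpecialLinearGroup.coe_mul, Matrix.SpecialLinearGroup.coe_mul]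
      exact Matrix.trace_mul_comm _ _
    have h₃' : Matrix.trace (((g₂ * g₁ : SL(2, ℂ)) : Matrix (Fin 2) (Fin 2) ℂ)) =
        Matrix.trace (((g₂' * g₁' : SL(2, ℂ)) : Matrix (Fin 2) (Fin 2) ℂ)) := by
      rw [tmc, tmc']; exact h₃
    have hcomm2 : Matrix.trace (((g₂ * g₁ * g₂⁻¹ * g₁⁻¹ : SL(2, ℂ)) :
        Matrix (Fin 2) (Fin 2) ℂ)) ≠ 2 := by
      intro hx
      apply hcomm
      rw [trace_comm_formula g₁ g₂]
      rw [trace_comm_formula g₂ g₁, tmc] at hx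
      linear_combination hx
    have hcomm2' : Matrix.trace (((g₂' * g₁' * g₂'⁻¹ * g₁'⁻¹ : SL(2, ℂ)) :
        Matrix (Fin 2) (Fin 2) ℂ)) ≠ 2 := by
      intro hx
      apply hco'
      rw [trace_comm_formula g₁' g₂']
      rw [trace_comm_formula g₂' g₁', tmc'] at hx
      linear_combination hx
    obtain ⟨h, ha, hb⟩ := main_aux g₂ g₁ g₂' g₁' h₂ h₁ h₃' hr hcomm2 hcomm2'
    exact ⟨h, hb, ha⟩
end

section
/- Let (g₁, g₂) ∈ SL(2,ℂ)² satisfy ((tr g₁)² ≠ 4 or (tr g₂)² ≠ 4) and tr(g₁ g₂ g₁⁻¹ g₂⁻¹) ≠ 2. If h ∈ SL(2,ℂ) commutes with both g₁ and g₂, then h = 1 or h = −1. That is, the centralizer of any element of G₂ is the center {±1} of SL(2,ℂ). -/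
/-!
Identify the traceless part of a `2 × 2` matrix `[[a, b], [c, d]]` with the vector
`(b, c, a - d)`; then `A` and `B` commute exactly when these vectors have zero cross product.
If `h` is not central its vector is nonzero, so everything commuting with `h` has a vector
parallel to it, and any two such matrices commute. Hence `g₁` and `g₂` commute and their
commutator, being `1`, has trace `2`. The central elements of `SL(2)` are the scalars `±1`.
-/

open Matrix
open scoped MatrixGroups

theorem cross_eq_zero_of_cross_eq_zero_of_ne_zero {K : Type*} [Field K] {u v w : Fin 3 → K}
    (hu : u ≠ 0) (hv : u ⨯₃ v = 0) (hw : u ⨯₃ w = 0) : v ⨯₃ w = 0 := by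
  have parallel {x : Fin 3 → K} (hx : u ⨯₃ x = 0) : ∃ a : K, a • u = x := by
    by_contra! h
    exact crossProduct_ne_zero_iff_linearIndependent.mpr
      ((LinearIndependent.pair_iff' hu).mpr h) hx
  obtain ⟨a, rfl⟩ := parallel hv
  obtain ⟨b, rfl⟩ := parallel hw
  simp only [map_smul, LinearMap.smul_apply, cross_self, smul_zero]

namespace Matrix

section CommRing

variable {R : Type*} [CommRing R]

def tracelessCoords (A : Matrix (Fin 2) (Fin 2) R) : Fin 3 → R :=
  ![A 0 1, A 1 0, A 0 0 - A 1 1]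

theorem commute_iff_cross_tracelessCoords_eq_zero {A B : Matrix (Fin 2) (Fin 2) R} :
    Commute A B ↔ tracelessCoords A ⨯₃ tracelessCoords B = 0 := by
  rw [Commute, SemiconjBy, ← sub_eq_zero, cross_apply, ← Matrix.ext_iff]
  simp only [sub_apply, mul_apply, Fin.sum_univ_two, zero_apply, Fin.forall_fin_two,
    tracelessCoords, cons_val_one, cons_val_zero, cons_val, cons_eq_zero_iff, zero_empty, and_true]
  constructor
  · rintro ⟨⟨h00, h01⟩, h10, -⟩
    exact ⟨by linear_combination h10, by linear_combination h01, by linear_combination h00⟩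
  · rintro ⟨h10, h01, h00⟩
    exact ⟨⟨by linear_combination h00, by linear_combination h01⟩,
      by linear_combination h10, by linear_combination -h00⟩

namespace SpecialLinearGroup

theorem eq_one_or_eq_neg_one_of_mem_center [NoZeroDivisors R] {h : SL(2, R)}
    (hh : h ∈ Subgroup.center SL(2, R)) : h = 1 ∨ h = -1 := by
  obtain ⟨r, hr, hrh⟩ := mem_center_iff.mp hh
  rw [Fintype.card_fin, sq, mul_self_eq_one_iff] at hr
  rcases hr with rfl | rfl
  · exact .inl (Subtype.ext (by rw [coe_one, ← hrh, map_one]))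
  · exact .inr (Subtype.ext (by rw [coe_neg, coe_one, ← hrh, map_neg, map_one]))

theorem mem_center_of_tracelessCoords_eq_zero {h : SL(2, R)}
    (hh : tracelessCoords (h : Matrix (Fin 2) (Fin 2) R) = 0) :
    h ∈ Subgroup.center SL(2, R) :=
  Subgroup.mem_center_iff.mpr fun _ ↦ Subtype.ext <|
    (commute_iff_cross_tracelessCoords_eq_zero.mpr
      (by rw [hh, map_zero, LinearMap.zero_apply])).eq.symm

end SpecialLinearGroup

end CommRing

theorem SpecialLinearGroup.commute_of_commute_of_notMem_center {K : Type*} [Field K]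
    {h g₁ g₂ : SL(2, K)} (hh : h ∉ Subgroup.center SL(2, K))
    (h₁ : Commute h g₁) (h₂ : Commute h g₂) : Commute g₁ g₂ := by
  have cross_eq_zero {g : SL(2, K)} (hg : Commute h g) :
      tracelessCoords (h : Matrix (Fin 2) (Fin 2) K) ⨯₃ tracelessCoords (g : Matrix _ _ K) = 0 :=
    commute_iff_cross_tracelessCoords_eq_zero.mp (congrArg Subtype.val hg.eq)
  have hne : tracelessCoords (h : Matrix (Fin 2) (Fin 2) K) ≠ 0 :=
    mt mem_center_of_tracelessCoords_eq_zero hh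
  exact Subtype.ext (commute_iff_cross_tracelessCoords_eq_zero.mpr
    (cross_eq_zero_of_cross_eq_zero_of_ne_zero hne (cross_eq_zero h₁) (cross_eq_zero h₂))).eq

end Matrix

theorem centralizer_of_G2_is_center_general
    (g₁ g₂ h : SL(2, ℂ))
    (hcomm : Matrix.trace (((g₁ * g₂ * g₁⁻¹ * g₂⁻¹ : SL(2, ℂ)) : Matrix (Fin 2) (Fin 2) ℂ)) ≠ 2)
    (hc₁ : h * g₁ = g₁ * h) (hc₂ : h * g₂ = g₂ * h) :
    h = 1 ∨ h = -1 := by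
  by_cases hh : h ∈ Subgroup.center SL(2, ℂ)
  · exact SpecialLinearGroup.eq_one_or_eq_neg_one_of_mem_center hh
  · have hg : Commute g₁ g₂ := SpecialLinearGroup.commute_of_commute_of_notMem_center hh hc₁ hc₂
    rw [← commutatorElement_def, commutatorElement_eq_one_iff_commute.mpr hg] at hcomm
    norm_num [trace_one] at hcomm

/-- The centralizer of any element of `G₂` is the center `{±1}` of `SL(2,ℂ)`. -/
theorem centralizer_of_G2_is_center
    (g₁ g₂ h : SL(2, ℂ))
    (hreg : (Matrix.trace ((g₁ : Matrix (Fin 2) (Fin 2) ℂ))) ^ 2 ≠ 4 ∨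
      (Matrix.trace ((g₂ : Matrix (Fin 2) (Fin 2) ℂ))) ^ 2 ≠ 4)
    (hcomm : Matrix.trace (((g₁ * g₂ * g₁⁻¹ * g₂⁻¹ : SL(2, ℂ)) : Matrix (Fin 2) (Fin 2) ℂ)) ≠ 2)
    (hc₁ : h * g₁ = g₁ * h) (hc₂ : h * g₂ = g₂ * h) :
    h = 1 ∨ h = -1 :=
  centralizer_of_G2_is_center_general g₁ g₂ h hcomm hc₁ hc₂
end

section
/- Let g₁ and g₂ be 2×2 real matrices with det(g₁) = det(g₂) = 1. Then det(g₁g₂ − g₂g₁) = −4·Θ(X₁, X₂, X₃), where X₁ = tr(g₁)/2, X₂ = tr(g₂)/2, X₃ = tr(g₁g₂)/2. (This identity computes the Minkowski square norm of the normal to the geodesic plane of the AdS₃ triangle (1, g₁, g₂); in particular the triangle is null or degenerate exactly when Θ = 0.) -/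
open Matrix

/-- `Θ(X₁,X₂,X₃) := (X₃ − X₁X₂)² − (X₁² − 1)(X₂² − 1)` (real version). -/
def ThetaR (X₁ X₂ X₃ : ℝ) : ℝ := (X₃ - X₁ * X₂) ^ 2 - (X₁ ^ 2 - 1) * (X₂ ^ 2 - 1)

theorem Matrix.det_commutator_fin_two {R : Type*} [CommRing R] (A B : Matrix (Fin 2) (Fin 2) R) :
    (A * B - B * A).det =
      4 * A.det * B.det - A.det * B.trace ^ 2 - B.det * A.trace ^ 2
        + A.trace * B.trace * (A * B).trace - (A * B).trace ^ 2 := by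
  simp only [det_fin_two, trace_fin_two, sub_apply, mul_apply, Fin.sum_univ_two]
  ring

/-- For `g₁, g₂` real 2×2 matrices of determinant 1,
`det(g₁g₂ − g₂g₁) = −4·Θ(tr g₁/2, tr g₂/2, tr (g₁g₂)/2)`. -/
theorem det_commutator_eq_neg_four_theta
    (g₁ g₂ : Matrix (Fin 2) (Fin 2) ℝ) (h₁ : g₁.det = 1) (h₂ : g₂.det = 1) :
    (g₁ * g₂ - g₂ * g₁).det =
      -4 * ThetaR (g₁.trace / 2) (g₂.trace / 2) ((g₁ * g₂).trace / 2) := by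
  rw [det_commutator_fin_two, h₁, h₂, ThetaR]
  ring
end

section
/- For all g₁, g₂ in SU(2), the traces tr(g₁), tr(g₂), tr(g₁g₂) are real, the half-traces X₁ = tr(g₁)/2, X₂ = tr(g₂)/2, X₃ = tr(g₁g₂)/2 satisfy −1 ≤ Xᵢ ≤ 1 for i = 1,2,3, and Θ(X₁, X₂, X₃) ≤ 0. (Thus the trace-coordinate map sends SU(2)² into the closure of the region I₃.) -/
/-!
An element of `SU(2)` is `!![a, b; -b̄, ā]` with `|a|² + |b|² = 1`, so its first row identifies
`SU(2)` with the unit sphere `S³ ⊂ ℝ⁴`, and `Re tr(g hᴴ) / 2` is the Euclidean inner product of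
the points of `g` and `h`. Hence `X₁, X₂, X₃` are the pairwise inner products of the unit vectors
of `1`, `g₁` and `g₂⁻¹`, and `Θ(X₁, X₂, X₃)` is minus their Gram determinant; `Θ ≤ 0` is the
Cauchy–Schwarz inequality for the components of `g₁` and `g₂⁻¹` orthogonal to `1`.
-/

open Matrix RealInnerProductSpace

theorem sq_inner_sub_inner_mul_inner_le {F : Type*} [NormedAddCommGroup F]
    [InnerProductSpace ℝ F] {e : F} (he : ‖e‖ = 1) (u v : F) :
    (⟪u, v⟫ - ⟪u, e⟫ * ⟪v, e⟫) ^ 2 ≤ (‖u‖ ^ 2 - ⟪u, e⟫ ^ 2) * (‖v‖ ^ 2 - ⟪v, e⟫ ^ 2) := by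
  have h := real_inner_mul_inner_self_le (u - ⟪u, e⟫ • e) (v - ⟪v, e⟫ • e)
  simp only [inner_sub_left, inner_sub_right, real_inner_smul_left, real_inner_smul_right,
    real_inner_self_eq_norm_sq, norm_smul, Real.norm_eq_abs, mul_pow, sq_abs, he,
    real_inner_comm _ e] at h
  linear_combination h

namespace Matrix

section StarRing

variable {n α : Type*} [Fintype n] [DecidableEq n] [CommRing α] [StarRing α]

theorem star_eq_adjugate_of_mem_specialUnitaryGroup {A : Matrix n n α}
    (hA : A ∈ specialUnitaryGroup n α) : star A = adjugate A := by
  have hinv : A⁻¹ = star A := inv_eq_left_inv ((mem_unitaryGroup_iff').1 hA.1)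
  rw [← hinv, inv_def, (mem_specialUnitaryGroup_iff.1 hA).2]
  simp

variable {A : Matrix (Fin 2) (Fin 2) α}

theorem apply_one_one_eq_star_of_mem_specialUnitaryGroup
    (hA : A ∈ specialUnitaryGroup (Fin 2) α) : A 1 1 = star (A 0 0) := by
  simpa [adjugate_fin_two] using
    (congrFun₂ (star_eq_adjugate_of_mem_specialUnitaryGroup hA) 0 0).symm

theorem apply_one_zero_eq_neg_star_of_mem_specialUnitaryGroup
    (hA : A ∈ specialUnitaryGroup (Fin 2) α) : A 1 0 = -star (A 0 1) := by
  simpa [adjugate_fin_two] using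
    congrArg Neg.neg (congrFun₂ (star_eq_adjugate_of_mem_specialUnitaryGroup hA) 1 0).symm

theorem star_trace_of_mem_specialUnitaryGroup (hA : A ∈ specialUnitaryGroup (Fin 2) α) :
    star (trace A) = trace A := by
  rw [← trace_conjTranspose, ← star_eq_conjTranspose,
    star_eq_adjugate_of_mem_specialUnitaryGroup hA, trace_fin_two, trace_fin_two,
    adjugate_fin_two]
  simp [add_comm]

end StarRing

noncomputable def realFirstRow (A : Matrix (Fin 2) (Fin 2) ℂ) : EuclideanSpace ℝ (Fin 4) :=
  !₂[(A 0 0).re, (A 0 0).im, (A 0 1).re, (A 0 1).im]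

variable {A B : Matrix (Fin 2) (Fin 2) ℂ}

theorem trace_mul_star_eq_two_mul_inner_realFirstRow (hA : A ∈ specialUnitaryGroup (Fin 2) ℂ)
    (hB : B ∈ specialUnitaryGroup (Fin 2) ℂ) :
    trace (A * star B) = 2 * (⟪realFirstRow A, realFirstRow B⟫ : ℂ) := by
  simp only [trace_fin_two, mul_apply, Fin.sum_univ_two, star_apply,
    apply_one_one_eq_star_of_mem_specialUnitaryGroup hA,
    apply_one_zero_eq_neg_star_of_mem_specialUnitaryGroup hA,
    apply_one_one_eq_star_of_mem_specialUnitaryGroup hB,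
    apply_one_zero_eq_neg_star_of_mem_specialUnitaryGroup hB]
  apply Complex.ext <;> simp [realFirstRow, PiLp.inner_apply, Fin.sum_univ_four] <;> ring

theorem norm_realFirstRow (hA : A ∈ specialUnitaryGroup (Fin 2) ℂ) : ‖realFirstRow A‖ = 1 := by
  have h := trace_mul_star_eq_two_mul_inner_realFirstRow hA hA
  rw [mem_unitaryGroup_iff.1 hA.1, trace_one, Fintype.card_fin, Nat.cast_ofNat] at h
  have hinner : ⟪realFirstRow A, realFirstRow A⟫ = 1 := by
    have : ((⟪realFirstRow A, realFirstRow A⟫ : ℝ) : ℂ) = 1 := by linear_combination -h / 2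
    exact_mod_cast this
  rw [real_inner_self_eq_norm_sq] at hinner
  exact (pow_eq_one_iff_of_nonneg (norm_nonneg _) two_ne_zero).1 hinner

end Matrix

/-- For `g₁, g₂ ∈ SU(2)`, the traces `tr(g₁), tr(g₂), tr(g₁g₂)` are real, the half-traces
`Xᵢ` lie in `[−1, 1]`, and `Θ(X₁, X₂, X₃) ≤ 0`: the trace-coordinate map sends `SU(2)²`
into the closure of the region `I₃`. -/
theorem su2_trace_coordinates_mem_closure_I3
    (g₁ g₂ : Matrix.specialUnitaryGroup (Fin 2) ℂ) :
    ∃ X₁ X₂ X₃ : ℝ,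
      Matrix.trace ((g₁ : Matrix (Fin 2) (Fin 2) ℂ)) = 2 * (X₁ : ℂ) ∧
      Matrix.trace ((g₂ : Matrix (Fin 2) (Fin 2) ℂ)) = 2 * (X₂ : ℂ) ∧
      Matrix.trace (((g₁ * g₂ : Matrix.specialUnitaryGroup (Fin 2) ℂ) :
        Matrix (Fin 2) (Fin 2) ℂ)) = 2 * (X₃ : ℂ) ∧
      -1 ≤ X₁ ∧ X₁ ≤ 1 ∧ -1 ≤ X₂ ∧ X₂ ≤ 1 ∧ -1 ≤ X₃ ∧ X₃ ≤ 1 ∧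
      (X₃ - X₁ * X₂) ^ 2 - (X₁ ^ 2 - 1) * (X₂ ^ 2 - 1) ≤ 0 := by
  have h₀ : (1 : Matrix (Fin 2) (Fin 2) ℂ) ∈ specialUnitaryGroup (Fin 2) ℂ := one_mem _
  have h₁ := g₁.2
  have h₂ : star (g₂ : Matrix (Fin 2) (Fin 2) ℂ) ∈ specialUnitaryGroup (Fin 2) ℂ := (star g₂).2
  set e := realFirstRow 1
  set u := realFirstRow g₁
  set v := realFirstRow (star g₂ : Matrix (Fin 2) (Fin 2) ℂ)
  have he : ‖e‖ = 1 := norm_realFirstRow h₀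
  have hu : ‖u‖ = 1 := norm_realFirstRow h₁
  have hv : ‖v‖ = 1 := norm_realFirstRow h₂
  have hΘ := sq_inner_sub_inner_mul_inner_le he u v
  rw [hu, hv] at hΘ
  refine ⟨⟪u, e⟫, ⟪v, e⟫, ⟪u, v⟫, ?_, ?_, ?_, neg_one_le_real_inner_of_norm_eq_one hu he,
    real_inner_le_one_of_norm_eq_one hu he, neg_one_le_real_inner_of_norm_eq_one hv he,
    real_inner_le_one_of_norm_eq_one hv he, neg_one_le_real_inner_of_norm_eq_one hu hv,
    real_inner_le_one_of_norm_eq_one hu hv, by linarith⟩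
  · simpa only [star_one, mul_one] using trace_mul_star_eq_two_mul_inner_realFirstRow h₁ h₀
  · rw [← star_trace_of_mem_specialUnitaryGroup g₂.2, ← trace_conjTranspose,
      ← star_eq_conjTranspose]
    simpa only [star_one, mul_one] using trace_mul_star_eq_two_mul_inner_realFirstRow h₂ h₀
  · rw [Submonoid.coe_mul]
    simpa only [star_star] using trace_mul_star_eq_two_mul_inner_realFirstRow h₁ h₂
end

section
/- Let (X₁, X₂, X₃) ∈ ℝ³ with −1 < X₁ < 1, −1 < X₂ < 1 and Θ(X₁, X₂, X₃) < 0. Then there exist g₁, g₂ in SU(2) such that tr(g₁)/2 = X₁, tr(g₂)/2 = X₂ and tr(g₁g₂)/2 = X₃. (Thus the trace-coordinate map from SU(2)² onto the region I₃ is surjective.) -/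
/-!
Identify a unit quaternion `a + b i + c j + d k` with the matrix
`!![a + b i, c + d i; -c + d i, a - b i]` of `SU(2)`; then half the trace is the real part, and
half the trace of a product is `a a' - b b' - c c' - d d'`. So it suffices to find unit vectors
`(X₁, s, 0, 0)` and `(X₂, y, b, 0)` of `ℝ⁴` with `X₁ X₂ - s y = X₃`. Taking `s = √(1 - X₁²)` forces
`y = (X₁ X₂ - X₃) / s`, and `Θ < 0` says exactly that `y² < 1 - X₂²`, leaving room for `b`.
-/

open Matrix Complex

namespace Matrix

noncomputable def quaternionMatrix (a b c d : ℝ) : Matrix (Fin 2) (Fin 2) ℂ :=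
  !![a + b * I, c + d * I; -c + d * I, a - b * I]

theorem star_quaternionMatrix (a b c d : ℝ) :
    star (quaternionMatrix a b c d) = quaternionMatrix a (-b) (-c) (-d) := by
  ext i j
  fin_cases i <;> fin_cases j <;>
    simp [quaternionMatrix]

theorem quaternionMatrix_mul (a b c d a' b' c' d' : ℝ) :
    quaternionMatrix a b c d * quaternionMatrix a' b' c' d' =
      quaternionMatrix (a * a' - b * b' - c * c' - d * d') (a * b' + b * a' + c * d' - d * c')
        (a * c' - b * d' + c * a' + d * b') (a * d' + b * c' - c * b' + d * a') := by
  ext i j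
  fin_cases i <;> fin_cases j <;>
    simp [quaternionMatrix, Matrix.mul_apply, Fin.sum_univ_two] <;>
    ring_nf <;> simp only [I_sq] <;> ring

theorem quaternionMatrix_one : quaternionMatrix 1 0 0 0 = 1 := by
  ext i j
  fin_cases i <;> fin_cases j <;> simp [quaternionMatrix]

theorem trace_quaternionMatrix (a b c d : ℝ) : trace (quaternionMatrix a b c d) = 2 * a := by
  simp [quaternionMatrix, trace_fin_two]
  ring

theorem det_quaternionMatrix (a b c d : ℝ) :
    det (quaternionMatrix a b c d) = ((a ^ 2 + b ^ 2 + c ^ 2 + d ^ 2 : ℝ) : ℂ) := by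
  rw [quaternionMatrix, det_fin_two_of]
  push_cast
  linear_combination (-(b : ℂ) ^ 2 - (d : ℂ) ^ 2) * I_sq

theorem quaternionMatrix_mem_specialUnitaryGroup {a b c d : ℝ}
    (h : a ^ 2 + b ^ 2 + c ^ 2 + d ^ 2 = 1) :
    quaternionMatrix a b c d ∈ specialUnitaryGroup (Fin 2) ℂ := by
  refine mem_specialUnitaryGroup_iff.mpr ⟨mem_unitaryGroup_iff.mpr ?_, ?_⟩
  · rw [star_quaternionMatrix, quaternionMatrix_mul, ← quaternionMatrix_one]
    congr 1
    · linear_combination h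
    all_goals ring
  · rw [det_quaternionMatrix, h, ofReal_one]

end Matrix

theorem exists_unit_vectors_of_theta_neg {X₁ X₂ X₃ : ℝ} (hX₁ : X₁ ^ 2 < 1)
    (hTheta : (X₃ - X₁ * X₂) ^ 2 - (X₁ ^ 2 - 1) * (X₂ ^ 2 - 1) < 0) :
    ∃ s y b : ℝ, X₁ ^ 2 + s ^ 2 = 1 ∧ X₂ ^ 2 + y ^ 2 + b ^ 2 = 1 ∧ X₁ * X₂ - s * y = X₃ := by
  have hs : 0 < 1 - X₁ ^ 2 := by linarith
  set s := √(1 - X₁ ^ 2)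
  have hs_sq : s ^ 2 = 1 - X₁ ^ 2 := Real.sq_sqrt hs.le
  have hs_ne : s ≠ 0 := (Real.sqrt_pos.mpr hs).ne'
  set y := (X₁ * X₂ - X₃) / s
  have hy_sq : y ^ 2 < 1 - X₂ ^ 2 := by
    rw [div_pow, hs_sq, div_lt_iff₀ hs]
    nlinarith
  refine ⟨s, y, √(1 - X₂ ^ 2 - y ^ 2), by linarith, ?_, by rw [mul_div_cancel₀ _ hs_ne]; ring⟩
  rw [Real.sq_sqrt (by linarith)]
  ring

theorem su2_trace_coordinates_surjective_onto_I3_general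
    (X₁ X₂ X₃ : ℝ) (h₁ : -1 < X₁) (h₁' : X₁ < 1)
    (hTheta : (X₃ - X₁ * X₂) ^ 2 - (X₁ ^ 2 - 1) * (X₂ ^ 2 - 1) < 0) :
    ∃ g₁ g₂ : Matrix.specialUnitaryGroup (Fin 2) ℂ,
      Matrix.trace ((g₁ : Matrix (Fin 2) (Fin 2) ℂ)) = 2 * (X₁ : ℂ) ∧
      Matrix.trace ((g₂ : Matrix (Fin 2) (Fin 2) ℂ)) = 2 * (X₂ : ℂ) ∧
      Matrix.trace (((g₁ * g₂ : Matrix.specialUnitaryGroup (Fin 2) ℂ) :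
        Matrix (Fin 2) (Fin 2) ℂ)) = 2 * (X₃ : ℂ) := by
  obtain ⟨s, y, b, hg₁, hg₂, hprod⟩ :=
    exists_unit_vectors_of_theta_neg (by nlinarith) hTheta
  refine ⟨⟨quaternionMatrix X₁ s 0 0, quaternionMatrix_mem_specialUnitaryGroup (by linarith)⟩,
    ⟨quaternionMatrix X₂ y b 0, quaternionMatrix_mem_specialUnitaryGroup (by linarith)⟩,
    trace_quaternionMatrix .., trace_quaternionMatrix .., ?_⟩
  rw [Submonoid.coe_mul, quaternionMatrix_mul, trace_quaternionMatrix]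
  congr 2
  linarith

/-- The trace-coordinate map from `SU(2)²` onto the region
`I₃ = {(X₁,X₂,X₃) ∈ (−1,1)³ : Θ < 0}` is surjective: every point of `I₃` with
`−1 < X₁, X₂ < 1` and `Θ(X₁,X₂,X₃) < 0` is realized by a pair of `SU(2)` elements. -/
theorem su2_trace_coordinates_surjective_onto_I3
    (X₁ X₂ X₃ : ℝ) (h₁ : -1 < X₁) (h₁' : X₁ < 1) (h₂ : -1 < X₂) (h₂' : X₂ < 1)
    (hTheta : (X₃ - X₁ * X₂) ^ 2 - (X₁ ^ 2 - 1) * (X₂ ^ 2 - 1) < 0) :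
    ∃ g₁ g₂ : Matrix.specialUnitaryGroup (Fin 2) ℂ,
      Matrix.trace ((g₁ : Matrix (Fin 2) (Fin 2) ℂ)) = 2 * (X₁ : ℂ) ∧
      Matrix.trace ((g₂ : Matrix (Fin 2) (Fin 2) ℂ)) = 2 * (X₂ : ℂ) ∧
      Matrix.trace (((g₁ * g₂ : Matrix.specialUnitaryGroup (Fin 2) ℂ) :
        Matrix (Fin 2) (Fin 2) ℂ)) = 2 * (X₃ : ℂ) :=
  su2_trace_coordinates_surjective_onto_I3_general X₁ X₂ X₃ h₁ h₁' hTheta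
end

section
/- Let G be a group, let V and E be finite types with source and target maps s, t : E → V, and let T ⊆ E be a spanning tree (the equivalence relation on V generated by {(s e, t e) : e ∈ T} is the total relation, and card T = card V − 1). Let G^V act on the space of graph connections G^E by (k·g)(e) = k(s e)⁻¹ · g(e) · k(t e), and let G act on G^{E∖T} by simultaneous conjugation (c·h)(e) = c⁻¹ · h(e) · c. Then the map G^{E∖T} → G^E that extends h by the identity element on all edges of T induces a bijection between the orbit space G^{E∖T}/Ad(G) and the orbit space G^E/G^V. (Tree gauge fixing: the space of gauge-invariant graph connections on a connected graph is isomorphic to G^h/Ad(G), where h = card E − card V + 1.) -/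
/-- The orbit relation on graph connections `G^E` under the gauge group `G^V`:
`(k·g)(e) = k(s e)⁻¹ · g(e) · k(t e)`. -/
def gaugeRel (G : Type*) [Group G] {V E : Type*} (s t : E → V) :
    (E → G) → (E → G) → Prop :=
  fun g g' => ∃ k : V → G, ∀ e, g' e = (k (s e))⁻¹ * g e * k (t e)

/-- The orbit relation under simultaneous conjugation: `(c·h)(e) = c⁻¹ · h(e) · c`. -/
def adRel (G : Type*) [Group G] {α : Type*} : (α → G) → (α → G) → Prop :=
  fun h h' => ∃ c : G, ∀ x, h' x = c⁻¹ * h x * c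

/-- Extend a connection defined on the edges off the tree `T` by the identity on `T`. -/
def extendByOne {G E : Type*} [One G] [DecidableEq E] (T : Finset E)
    (h : {e : E // e ∉ T} → G) : E → G :=
  fun e => if he : e ∈ T then 1 else h ⟨e, he⟩

lemma extendByOne_compat {G V E : Type*} [Group G] [DecidableEq E]
    (s t : E → V) (T : Finset E) :
    ∀ h h' : {e : E // e ∉ T} → G, adRel G h h' →
      gaugeRel G s t (extendByOne T h) (extendByOne T h') := by
  rintro h h' ⟨c, hc⟩
  refine ⟨fun _ => c, fun e => ?_⟩
  by_cases he : e ∈ T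
  · simp [extendByOne, he]
  · simp [extendByOne, he, hc ⟨e, he⟩]

/-!
Fixing the gauge along the spanning tree is possible because a tree has no cycles: adding its
edges one at a time, each new edge joins two different components, and the gauge on one of them
can be multiplied on the right by a constant to make the new edge trivial without disturbing the
edges already fixed. This acyclicity is read off from the count `card T = card V - 1`, since each
edge lowers the number of components by at most one. Conversely, a gauge transformation
between two connections that are trivial on the tree is constant along every tree edge, hence
constant since the tree spans, and so acts on the remaining edges by a single conjugation.
-/

open Relation

lemma Relation.EqvGen.eq_of_forall_rel {α β : Type*} {r : α → α → Prop} {f : α → β}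
    (hf : ∀ a b, r a b → f a = f b) {x y : α} (h : EqvGen r x y) : f x = f y :=
  congrArg (Quot.lift f hf) (Quot.eqvGen_sound h)

section EdgeRel

variable {V E : Type*}

def edgeRel (s t : E → V) (T : Finset E) : V → V → Prop :=
  fun a b => ∃ e ∈ T, s e = a ∧ t e = b

variable {s t : E → V}

lemma edgeRel_mono {T T' : Finset E} (hT : T ⊆ T') {a b : V} :
    edgeRel s t T a b → edgeRel s t T' a b :=
  fun ⟨e, he, h⟩ => ⟨e, hT he, h⟩

lemma eqvGen_edgeRel_empty {x y : V} (h : EqvGen (edgeRel s t ∅) x y) : x = y :=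
  h.eq_of_forall_rel (f := id) fun _ _ ⟨_, he, _⟩ => absurd he (Finset.notMem_empty _)

lemma eqvGen_edgeRel_insert_of_eqvGen [DecidableEq E] {T : Finset E} {e₀ : E}
    (h₀ : EqvGen (edgeRel s t T) (s e₀) (t e₀)) {x y : V}
    (h : EqvGen (edgeRel s t (insert e₀ T)) x y) : EqvGen (edgeRel s t T) x y := by
  refine Quot.eqvGen_exact (h.eq_of_forall_rel ?_)
  rintro _ _ ⟨e, he, rfl, rfl⟩
  rcases Finset.mem_insert.1 he with rfl | he
  · exact Quot.eqvGen_sound h₀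
  · exact Quot.sound ⟨e, he, rfl, rfl⟩

lemma card_quot_edgeRel_insert_of_eqvGen [DecidableEq E] {T : Finset E} {e₀ : E}
    (h₀ : EqvGen (edgeRel s t T) (s e₀) (t e₀)) :
    Nat.card (Quot (edgeRel s t (insert e₀ T))) = Nat.card (Quot (edgeRel s t T)) := by
  let m : Quot (edgeRel s t T) → Quot (edgeRel s t (insert e₀ T)) :=
    Quot.map id fun _ _ => edgeRel_mono (Finset.subset_insert e₀ T)
  refine (Nat.card_eq_of_bijective m ⟨?_, ?_⟩).symm
  · rintro ⟨x⟩ ⟨y⟩ hxy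
    exact Quot.eqvGen_sound (eqvGen_edgeRel_insert_of_eqvGen h₀ (Quot.eqvGen_exact hxy))
  · rintro ⟨v⟩
    exact ⟨Quot.mk _ v, rfl⟩

variable [Finite V]

lemma card_quot_edgeRel_le_insert [DecidableEq E] (T : Finset E) (e₀ : E) :
    Nat.card (Quot (edgeRel s t T)) ≤ Nat.card (Quot (edgeRel s t (insert e₀ T))) + 1 := by
  classical
  set r := edgeRel s t T
  -- `f` merges the class of `s e₀` into that of `t e₀`, so `φ` below misses at most that class
  let f : V → Quot r := fun v =>
    if Quot.mk r v = Quot.mk r (s e₀) then Quot.mk r (t e₀) else Quot.mk r v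
  have hf : ∀ a b, edgeRel s t (insert e₀ T) a b → f a = f b := by
    rintro _ _ ⟨e, he, rfl, rfl⟩
    rcases Finset.mem_insert.1 he with rfl | he
    · simp only [f]; split_ifs <;> simp_all
    · have hst : Quot.mk r (s e) = Quot.mk r (t e) := Quot.sound ⟨e, he, rfl, rfl⟩
      simp only [f, hst]
  let φ : Quot (edgeRel s t (insert e₀ T)) → Quot r := Quot.lift f hf
  have hrange : Set.univ ⊆ insert (Quot.mk r (s e₀)) (Set.range φ) := by
    rintro ⟨v⟩ -
    by_cases hv : Quot.mk r v = Quot.mk r (s e₀)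
    · exact .inl hv
    · exact .inr ⟨Quot.mk _ v, if_neg hv⟩
  calc Nat.card (Quot r) = (Set.univ : Set (Quot r)).ncard := (Set.ncard_univ _).symm
    _ ≤ (insert (Quot.mk r (s e₀)) (Set.range φ)).ncard := Set.ncard_le_ncard hrange
    _ ≤ (Set.range φ).ncard + 1 := Set.ncard_insert_le _ _
    _ ≤ _ := Nat.add_le_add_right (Finite.card_range_le φ) 1

lemma card_le_card_quot_edgeRel_add_card (T : Finset E) :
    Nat.card V ≤ Nat.card (Quot (edgeRel s t T)) + T.card := by
  classical
  induction T using Finset.induction_on with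
  | empty =>
    simpa using Nat.card_le_card_of_injective _
      fun x y h => eqvGen_edgeRel_empty (s := s) (t := t) (Quot.eqvGen_exact h)
  | insert e₀ T he ih =>
    have := card_quot_edgeRel_le_insert (s := s) (t := t) T e₀
    rw [Finset.card_insert_of_notMem he]
    omega

/-- The counting form of acyclicity: every edge of `T` joins two different classes. -/
def IsForest (s t : E → V) (T : Finset E) : Prop :=
  Nat.card (Quot (edgeRel s t T)) + T.card = Nat.card V

lemma isForest_of_connected_of_card {T : Finset E} (hconn : ∀ v w, EqvGen (edgeRel s t T) v w)
    (hcard : T.card = Nat.card V - 1) : IsForest s t T := by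
  have h₁ : Nat.card (Quot (edgeRel s t T)) ≤ 1 := Finite.card_le_one_iff_subsingleton.2
    ⟨Quot.ind fun v => Quot.ind fun w => Quot.eqvGen_sound (hconn v w)⟩
  have h₂ := Nat.card_le_card_of_surjective _ (Quot.mk_surjective (r := edgeRel s t T))
  have h₃ := card_le_card_quot_edgeRel_add_card (s := s) (t := t) T
  unfold IsForest
  omega

lemma IsForest.of_insert [DecidableEq E] {T : Finset E} {e₀ : E} (he₀ : e₀ ∉ T)
    (h : IsForest s t (insert e₀ T)) :
    IsForest s t T ∧ ¬ EqvGen (edgeRel s t T) (s e₀) (t e₀) := by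
  unfold IsForest at h ⊢
  rw [Finset.card_insert_of_notMem he₀] at h
  have h₁ := card_quot_edgeRel_le_insert (s := s) (t := t) T e₀
  have h₂ := card_le_card_quot_edgeRel_add_card (s := s) (t := t) T
  refine ⟨by omega, fun h₀ => ?_⟩
  have := card_quot_edgeRel_insert_of_eqvGen h₀
  omega

lemma IsForest.exists_gauge_eq_one {G : Type*} [Group G] {T : Finset E} (hT : IsForest s t T)
    (g : E → G) : ∃ k : V → G, ∀ e ∈ T, (k (s e))⁻¹ * g e * k (t e) = 1 := by
  classical
  induction T using Finset.induction_on with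
  | empty => exact ⟨1, by simp⟩
  | insert e₀ T he₀ ih =>
    obtain ⟨hT', hsep⟩ := hT.of_insert he₀
    obtain ⟨k, hk⟩ := ih hT'
    -- correct `k` on the component of `t e₀`, which `e₀` joins to a different one
    let c := (k (t e₀))⁻¹ * (g e₀)⁻¹ * k (s e₀)
    refine ⟨fun v => k v * if EqvGen (edgeRel s t T) v (t e₀) then c else 1, ?_⟩
    intro e he
    rcases Finset.mem_insert.1 he with rfl | he
    · simp only [if_neg hsep, if_pos (EqvGen.refl _), c]
      group
    · have hst : EqvGen (edgeRel s t T) (s e) (t e) := .rel _ _ ⟨e, he, rfl, rfl⟩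
      have hiff : EqvGen (edgeRel s t T) (s e) (t e₀) ↔ EqvGen (edgeRel s t T) (t e) (t e₀) :=
        ⟨(hst.symm _ _).trans _ _ _, hst.trans _ _ _⟩
      have hconj : ∀ d : G, (k (s e) * d)⁻¹ * g e * (k (t e) * d) = 1 := fun d =>
        calc _ = d⁻¹ * ((k (s e))⁻¹ * g e * k (t e)) * d := by group
          _ = 1 := by rw [hk e he]; group
      simp only [hiff]
      split_ifs <;> exact hconj _

end EdgeRel

lemma gaugeRel_equivalence (G : Type*) [Group G] {V E : Type*} (s t : E → V) :
    Equivalence (gaugeRel G s t) where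
  refl _ := ⟨1, fun _ => by simp⟩
  symm := fun ⟨k, hk⟩ => ⟨k⁻¹, fun e => by
    rw [hk e]; simp only [Pi.inv_apply, inv_inv]; group⟩
  trans := fun ⟨k, hk⟩ ⟨k', hk'⟩ => ⟨k * k', fun e => by
    rw [hk' e, hk e]; simp only [Pi.mul_apply, mul_inv_rev]; group⟩

section ExtendByOne

variable {G V E : Type*} [Group G] [DecidableEq E] {T : Finset E}

lemma extendByOne_of_eq_one {g : E → G} (hg : ∀ e ∈ T, g e = 1) :
    extendByOne T (fun x => g x) = g := by
  funext e
  by_cases he : e ∈ T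
  · simp [extendByOne, he, hg e he]
  · simp [extendByOne, he]

lemma adRel_of_gaugeRel_extendByOne {s t : E → V} (hconn : ∀ v w, EqvGen (edgeRel s t T) v w)
    {h h' : {e // e ∉ T} → G} (hg : gaugeRel G s t (extendByOne T h) (extendByOne T h')) :
    adRel G h h' := by
  obtain ⟨k, hk⟩ := hg
  have hconst : ∀ v w, k v = k w := fun v w => (hconn v w).eq_of_forall_rel <| by
    rintro _ _ ⟨e, he, rfl, rfl⟩
    simpa [extendByOne, he, eq_comm (a := (1 : G)), inv_mul_eq_one] using hk e
  obtain ⟨c, hc⟩ : ∃ c, ∀ v, k v = c := (isEmpty_or_nonempty V).elim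
    (fun _ => ⟨1, isEmptyElim⟩) fun ⟨v₀⟩ => ⟨k v₀, fun v => hconst v v₀⟩
  exact ⟨c, fun x => by simpa [extendByOne, x.2, hc] using hk x⟩

end ExtendByOne

theorem tree_gauge_fixing_bijective_general {G V E : Type*} [Group G]
    [Fintype V] [DecidableEq E] (s t : E → V) (T : Finset E)
    (hconn : ∀ v w : V,
      Relation.EqvGen (fun a b => ∃ e ∈ T, s e = a ∧ t e = b) v w)
    (hcard : T.card = Fintype.card V - 1) :
    Function.Bijective
      (Quot.map (extendByOne T) (extendByOne_compat s t T) :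
        Quot (adRel G (α := {e : E // e ∉ T})) → Quot (gaugeRel G s t)) := by
  refine ⟨?_, ?_⟩
  · rintro ⟨h⟩ ⟨h'⟩ hq
    exact Quot.sound <| adRel_of_gaugeRel_extendByOne hconn <|
      (gaugeRel_equivalence G s t).eqvGen_iff.1 (Quot.eqvGen_exact hq)
  · rintro ⟨g⟩
    have hT : IsForest s t T :=
      isForest_of_connected_of_card hconn (by rwa [Nat.card_eq_fintype_card])
    obtain ⟨k, hk⟩ := hT.exists_gauge_eq_one g
    refine ⟨Quot.mk _ fun x => (k (s x))⁻¹ * g x * k (t x),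
      (Quot.sound ⟨k, fun e => ?_⟩).symm⟩
    rw [extendByOne_of_eq_one (g := fun e => (k (s e))⁻¹ * g e * k (t e)) hk]

/-- Tree gauge fixing: if `T` is a spanning tree of the (connected) graph with vertices `V`
and edges `E`, then extending by the identity on `T` induces a bijection between the
orbit space `G^{E∖T}/Ad(G)` and the orbit space `G^E/G^V` of gauge-invariant graph
connections. -/
theorem tree_gauge_fixing_bijective {G V E : Type*} [Group G]
    [Fintype V] [Fintype E] [DecidableEq E] (s t : E → V) (T : Finset E)
    (hconn : ∀ v w : V,
      Relation.EqvGen (fun a b => ∃ e ∈ T, s e = a ∧ t e = b) v w)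
    (hcard : T.card = Fintype.card V - 1) :
    Function.Bijective
      (Quot.map (extendByOne T) (extendByOne_compat s t T) :
        Quot (adRel G (α := {e : E // e ∉ T})) → Quot (gaugeRel G s t)) :=
  tree_gauge_fixing_bijective_general s t T hconn hcard
end

section
/- Let V and E be finite types with source and target maps s, t : E → V, and call T ⊆ E a spanning tree if the equivalence relation on V generated by {(s e, t e) : e ∈ T} is the total relation and card T = card V − 1. Then for any two spanning trees T and U there exists a finite sequence T = T₀, T₁, …, Tₙ = U of spanning trees such that each T_{i+1} is obtained from T_i by an elementary move, i.e. there exist e ∈ T_i and f ∉ T_i with T_{i+1} = (T_i ∖ {e}) ∪ {f}. -/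
/-!
Spanning trees are the bases of the graphic matroid, and the theorem is basis exchange iterated.
For `e ∈ T \ U`, the edges of `T.erase e` still join every vertex to `s e` or to `t e`, but not
`s e` to `t e`, since an edge set joining all vertices has at least `card V - 1` edges. As `U`
joins `s e` to `t e`, some `f ∈ U` crosses this cut, and `insert f (T.erase e)` is a spanning
tree with one edge outside `U` fewer than `T`; induct on `card (T \ U)`.
-/

/-- A subset `T` of the edges of a (multi)graph with source/target maps `s, t : E → V` is a
spanning tree if the equivalence relation on `V` generated by `{(s e, t e) : e ∈ T}` is the
total relation and `card T = card V − 1`. -/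
def IsSpanningTree {V E : Type*} [Fintype V] (s t : E → V) (T : Finset E) : Prop :=
  (∀ v w : V, Relation.EqvGen (fun a b => ∃ e ∈ T, s e = a ∧ t e = b) v w) ∧
  T.card = Fintype.card V - 1

open Relation

theorem Relation.EqvGen.iff_of_rel {α : Type*} {r : α → α → Prop} {P : α → Prop}
    (hP : ∀ a b, r a b → (P a ↔ P b)) {a b : α} (h : EqvGen r a b) : P a ↔ P b :=
  have hequiv : Equivalence fun a b => P a ↔ P b := ⟨fun _ => Iff.rfl, Iff.symm, Iff.trans⟩
  hequiv.eqvGen_iff.1 (h.mono hP)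

theorem Relation.ReflTransGen.exists_fin_path {α : Type*} {r : α → α → Prop} {a b : α}
    (h : ReflTransGen r a b) :
    ∃ (n : ℕ) (f : Fin (n + 1) → α), f 0 = a ∧ f (Fin.last n) = b ∧
      ∀ i : Fin n, r (f i.castSucc) (f i.succ) := by
  induction h using Relation.ReflTransGen.head_induction_on with
  | refl => exact ⟨0, fun _ => b, rfl, rfl, fun i => i.elim0⟩
  | head hac _ ih =>
    obtain ⟨n, f, hf0, hflast, hf⟩ := ih
    refine ⟨n + 1, Fin.cons _ f, rfl, by simpa [← Fin.succ_last] using hflast, ?_⟩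
    refine Fin.cases (by simpa [hf0] using hac) fun i => ?_
    simpa [← Fin.succ_castSucc] using hf i

section Linked

variable {V E : Type*} (s t : E → V)

def Linked (S : Finset E) : V → V → Prop :=
  EqvGen fun a b => ∃ e ∈ S, s e = a ∧ t e = b

variable {s t} {S S' : Finset E} {a b c : V}

theorem Linked.refl (a : V) : Linked s t S a a := EqvGen.refl a

theorem Linked.symm (h : Linked s t S a b) : Linked s t S b a := EqvGen.symm _ _ h

theorem Linked.trans (h : Linked s t S a b) (h' : Linked s t S b c) : Linked s t S a c :=
  EqvGen.trans _ _ _ h h'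

theorem Linked.mono (hS : S ⊆ S') (h : Linked s t S a b) : Linked s t S' a b :=
  EqvGen.mono (fun _ _ ⟨e, he, hs, ht⟩ => ⟨e, hS he, hs, ht⟩) _ _ h

theorem linked_of_mem {e : E} (he : e ∈ S) : Linked s t S (s e) (t e) :=
  EqvGen.rel _ _ ⟨e, he, rfl, rfl⟩

theorem linked_of_forall_linked_or (hab : Linked s t S a b)
    (h : ∀ v, Linked s t S v a ∨ Linked s t S v b) (v w : V) : Linked s t S v w := by
  rcases h v with hv | hv <;> rcases h w with hw | hw
  · exact hv.trans hw.symm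
  · exact hv.trans (hab.trans hw.symm)
  · exact hv.trans (hab.symm.trans hw.symm)
  · exact hv.trans hw.symm

theorem card_le_card_add_one_of_linked [Fintype V] (h : ∀ v w, Linked s t S v w) :
    Fintype.card V ≤ S.card + 1 := by
  -- The simple graph drops loops and merges parallel edges, which only lowers the edge count.
  let G := SimpleGraph.fromRel fun a b => ∃ e ∈ S, s e = a ∧ t e = b
  rcases isEmpty_or_nonempty V with hV | hV
  · simp
  have hG : G.Connected := by
    refine ⟨fun v w => ?_⟩
    induction h v w with
    | rel a b hab =>
      by_cases heq : a = b
      · exact heq ▸ SimpleGraph.Reachable.refl a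
      · exact (SimpleGraph.fromRel_adj _ a b |>.2 ⟨heq, Or.inl hab⟩).reachable
    | refl a => exact .refl a
    | symm _ _ _ ih => exact ih.symm
    | trans _ _ _ _ _ ih ih' => exact ih.trans ih'
  have hedges : G.edgeSet ⊆ (fun e => s(s e, t e)) '' (S : Set E) := by
    rintro ⟨a, b⟩ hab
    obtain ⟨-, ⟨e, he, rfl, rfl⟩ | ⟨e, he, rfl, rfl⟩⟩ := (SimpleGraph.mem_edgeSet _).1 hab
    · exact ⟨e, he, rfl⟩
    · exact ⟨e, he, Sym2.eq_swap⟩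
  calc Fintype.card V = Nat.card V := Nat.card_eq_fintype_card.symm
    _ ≤ G.edgeSet.ncard + 1 := hG.card_vert_le_card_edgeSet_add_one
    _ ≤ S.card + 1 := by
      gcongr
      calc G.edgeSet.ncard ≤ ((fun e => s(s e, t e)) '' (S : Set E)).ncard :=
            Set.ncard_le_ncard hedges
        _ ≤ (S : Set E).ncard := Set.ncard_image_le
        _ = S.card := Set.ncard_coe_finset S

theorem linked_erase_or [DecidableEq E] (hS : ∀ v w, Linked s t S v w) {e : E} (he : e ∈ S)
    (v : V) : Linked s t (S.erase e) v (s e) ∨ Linked s t (S.erase e) v (t e) := by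
  refine (EqvGen.iff_of_rel (P := fun v => Linked s t (S.erase e) v (s e) ∨
    Linked s t (S.erase e) v (t e)) ?_ (hS v (s e))).2 (.inl (.refl _))
  rintro _ _ ⟨g, hg, rfl, rfl⟩
  by_cases hge : g = e
  · subst hge
    exact iff_of_true (.inl (.refl _)) (.inr (.refl _))
  · have hgg := linked_of_mem (s := s) (t := t) (Finset.mem_erase.2 ⟨hge, hg⟩)
    exact or_congr ⟨hgg.symm.trans, hgg.trans⟩ ⟨hgg.symm.trans, hgg.trans⟩

theorem exists_mem_not_linked_iff (hab : Linked s t S' a b) (hnab : ¬ Linked s t S a b) :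
    ∃ f ∈ S', ¬ (Linked s t S (s f) a ↔ Linked s t S (t f) a) := by
  by_contra! hcut
  refine hnab ((EqvGen.iff_of_rel (P := (Linked s t S · a)) ?_ hab).1 (.refl a)).symm
  rintro _ _ ⟨f, hf, rfl, rfl⟩
  exact hcut f hf

end Linked

section SpanningTree

variable {V E : Type*} [Fintype V] [DecidableEq E] {s t : E → V}

theorem IsSpanningTree.not_linked_erase {T : Finset E} (hT : IsSpanningTree s t T) {e : E}
    (he : e ∈ T) : ¬ Linked s t (T.erase e) (s e) (t e) := fun hlinked => by
  have hcard := card_le_card_add_one_of_linked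
    (linked_of_forall_linked_or hlinked (linked_erase_or hT.1 he))
  have hpos : 0 < T.card := Finset.card_pos.2 ⟨e, he⟩
  rw [Finset.card_erase_of_mem he] at hcard
  have := hT.2
  omega

theorem IsSpanningTree.exists_exchange {T U : Finset E} (hT : IsSpanningTree s t T)
    (hU : ∀ v w, Linked s t U v w) {e : E} (heT : e ∈ T) (heU : e ∉ U) :
    ∃ f ∈ U, f ∉ T ∧ IsSpanningTree s t (insert f (T.erase e)) := by
  set T' := T.erase e
  obtain ⟨f, hfU, hf⟩ := exists_mem_not_linked_iff (hU (s e) (t e)) (hT.not_linked_erase heT)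
  have hsplit := linked_erase_or hT.1 heT
  have hfT : f ∉ T := fun hfT => hf <| by
    have hfe : f ≠ e := ne_of_mem_of_not_mem hfU heU
    have hff := linked_of_mem (s := s) (t := t) (Finset.mem_erase.2 ⟨hfe, hfT⟩)
    exact ⟨hff.symm.trans, hff.trans⟩
  have hmono : T' ⊆ insert f T' := Finset.subset_insert f T'
  have hff : Linked s t (insert f T') (s f) (t f) := linked_of_mem (Finset.mem_insert_self f T')
  have hab : Linked s t (insert f T') (s e) (t e) := by
    by_cases hsf : Linked s t T' (s f) (s e)
    · have htf := (hsplit (t f)).resolve_left fun htf => hf (iff_of_true hsf htf)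
      exact (hsf.mono hmono).symm.trans (hff.trans (htf.mono hmono))
    · have hsf' := (hsplit (s f)).resolve_left hsf
      have htf : Linked s t T' (t f) (s e) := by
        by_contra htf
        exact hf (iff_of_false hsf htf)
      exact (htf.mono hmono).symm.trans (hff.symm.trans (hsf'.mono hmono))
  refine ⟨f, hfU, hfT,
    linked_of_forall_linked_or hab fun v => (hsplit v).imp (.mono hmono) (.mono hmono), ?_⟩
  rw [Finset.card_insert_of_notMem (fun h => hfT (Finset.mem_of_mem_erase h)),
    Finset.card_erase_add_one heT]
  exact hT.2

def IsElementaryMove (A B : Finset E) : Prop :=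
  ∃ e ∈ A, ∃ f ∉ A, B = insert f (A.erase e)

theorem IsSpanningTree.reflTransGen_isElementaryMove {T U : Finset E}
    (hT : IsSpanningTree s t T) (hU : IsSpanningTree s t U) :
    ReflTransGen (fun A B : {S // IsSpanningTree s t S} => IsElementaryMove A.1 B.1)
      ⟨T, hT⟩ ⟨U, hU⟩ := by
  induction hn : (T \ U).card generalizing T with
  | zero =>
    have hTU : T = U := Finset.eq_of_subset_of_card_le
      (Finset.sdiff_eq_empty_iff_subset.1 (Finset.card_eq_zero.1 hn)) (hU.2.trans hT.2.symm).le
    subst hTU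
    exact .refl
  | succ n ih =>
    obtain ⟨e, he⟩ : (T \ U).Nonempty := Finset.card_pos.1 (by omega)
    obtain ⟨heT, heU⟩ := Finset.mem_sdiff.1 he
    obtain ⟨f, hfU, hfT, hT'⟩ := hT.exists_exchange hU.1 heT heU
    refine .head ⟨e, heT, f, hfT, rfl⟩ (ih hT' ?_)
    rw [Finset.insert_sdiff_of_mem _ hfU, Finset.erase_sdiff_comm, Finset.card_erase_of_mem he,
      hn, Nat.add_sub_cancel]

end SpanningTree

theorem spanning_trees_connected_by_elementary_moves_general
    {V E : Type*} [Fintype V] [DecidableEq E]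
    (s t : E → V) (T U : Finset E)
    (hT : IsSpanningTree s t T) (hU : IsSpanningTree s t U) :
    ∃ (n : ℕ) (seq : Fin (n + 1) → Finset E),
      seq 0 = T ∧ seq (Fin.last n) = U ∧
      (∀ i, IsSpanningTree s t (seq i)) ∧
      (∀ i : Fin n, ∃ e ∈ seq i.castSucc, ∃ f ∉ seq i.castSucc,
        seq i.succ = insert f ((seq i.castSucc).erase e)) := by
  obtain ⟨n, seq, h0, hlast, hmove⟩ := (hT.reflTransGen_isElementaryMove hU).exists_fin_path
  exact ⟨n, fun i => (seq i).1, congrArg Subtype.val h0, congrArg Subtype.val hlast,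
    fun i => (seq i).2, hmove⟩

/-- Any two spanning trees of a graph are connected by a finite sequence of spanning trees in
which each successive tree is obtained from the previous one by an elementary move
`T ↦ (T ∖ {e}) ∪ {f}` with `e ∈ T`, `f ∉ T`. -/
theorem spanning_trees_connected_by_elementary_moves
    {V E : Type*} [Fintype V] [Fintype E] [DecidableEq E]
    (s t : E → V) (T U : Finset E)
    (hT : IsSpanningTree s t T) (hU : IsSpanningTree s t U) :
    ∃ (n : ℕ) (seq : Fin (n + 1) → Finset E),
      seq 0 = T ∧ seq (Fin.last n) = U ∧
      (∀ i, IsSpanningTree s t (seq i)) ∧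
      (∀ i : Fin n, ∃ e ∈ seq i.castSucc, ∃ f ∉ seq i.castSucc,
        seq i.succ = insert f ((seq i.castSucc).erase e)) :=
  spanning_trees_connected_by_elementary_moves_general s t T U hT hU
end
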